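/- arXiv:1508.07543 — 7 statements merged into one kernel-verified Lean document; each statement's English description precedes it below -/
import Mathlib

section
/- For every n ∈ ℕ with n ≥ 1, every (a_j)_{1≤j≤n} ∈ ℂ^n, every (γ_{j,k})_{1≤j<k≤n} ∈ ℝ^{n(n−1)/2} and every ρ, η ∈ B_n: M_n((a_j)_{1≤j≤n},(γ_{j,k})_{1≤j<k≤n})(ρ,η) = A + B, where A := e^{i·[j≥2]·Σ_{l=1}^{j−1} b_n(ρ)(l)·γ_{l,j}}·a_j if there exists j ∈ {1,…,n} (necessarily unique) such that b_n(ρ)(j) < b_n(η)(j) and b_n(ρ)(k) = b_n(η)(k) for all k ∈ {1,…,n}\{j}, and A := 0 otherwise; and B := e^{−i·[j≥2]·Σ_{l=1}^{j−1} b_n(η)(l)·γ_{l,j}}·conj(a_j) if there exists j ∈ {1,…,n} (necessarily unique) such that b_n(ρ)(j) > b_n(η)(j) and b_n(ρ)(k) = b_n(η)(k) for all k ∈ {1,…,n}\{j}, and B := 0 otherwise. Here [P] is 1 if P holds and 0 otherwise. -/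
open Matrix

/-- The recursively defined unitary matrix `U_n((ξ_j))` (0-based indexing of `B_n = Fin (2^n)`). -/
noncomputable def Umat : (n : ℕ) → (Fin n → ℝ) → Matrix (Fin (2 ^ n)) (Fin (2 ^ n)) ℂ
  | 0, _ => 1
  | n + 1, ξ =>
      (Matrix.reindex (finSumFinEquiv.trans (finCongr (by rw [pow_succ, mul_two])))
        (finSumFinEquiv.trans (finCongr (by rw [pow_succ, mul_two]))))
        (Matrix.fromBlocks (Umat n fun j => ξ j.castSucc) 0 0
          (Complex.exp (Complex.I * (ξ (Fin.last n) : ℂ)) • Umat n fun j => ξ j.castSucc))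

/-- The recursively defined hopping matrix `M_n((a_j), (γ_{j,k}))`; only the entries
`γ j k` with `j < k` are relevant. -/
noncomputable def Mmat : (n : ℕ) → (Fin n → ℂ) → (Fin n → Fin n → ℝ) →
    Matrix (Fin (2 ^ n)) (Fin (2 ^ n)) ℂ
  | 0, _, _ => 0
  | n + 1, a, γ =>
      (Matrix.reindex (finSumFinEquiv.trans (finCongr (by rw [pow_succ, mul_two])))
        (finSumFinEquiv.trans (finCongr (by rw [pow_succ, mul_two]))))
        (Matrix.fromBlocks
          (Mmat n (fun j => a j.castSucc) fun j k => γ j.castSucc k.castSucc)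
          (a (Fin.last n) • Umat n fun j => γ j.castSucc (Fin.last n))
          ((starRingEnd ℂ) (a (Fin.last n)) • (Umat n fun j => γ j.castSucc (Fin.last n))ᴴ)
          (Mmat n (fun j => a j.castSucc) fun j k => γ j.castSucc k.castSucc))

/-- `b_n(ρ)(j)` : the `j`-th binary digit of `ρ` (0-based). -/
def bdig {N : ℕ} (ρ : Fin N) (j : ℕ) : ℕ := if Nat.testBit ρ.val j then 1 else 0

/-!
`M_n` is the Hermitian part `R_n + R_nᴴ` of the matrix `R_n` whose `(ρ, η)` entry is the amplitude
for `η` arising from `ρ` by raising a single binary digit. Indeed, `R_{n+1}` is block upper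
triangular: the top digit of `ρ, η` selects the block, the diagonal blocks `R_n` keep that digit,
and the corner block `a_{n+1} U_n` raises it. Since `U_n` is diagonal with phase
`exp (i Σ_l b(ρ)(l) ξ_l)`, raising the top digit picks up exactly the phase of the formula.
-/

open Complex

def twoPowSuccEquiv (n : ℕ) : Fin (2 ^ n) ⊕ Fin (2 ^ n) ≃ Fin (2 ^ (n + 1)) :=
  finSumFinEquiv.trans (finCongr (by rw [pow_succ, mul_two]))

section Digits

variable {n : ℕ}

@[simp]
lemma bdig_self_eq_zero (ρ : Fin (2 ^ n)) : bdig ρ n = 0 := by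
  simp [bdig, Nat.testBit_lt_two_pow ρ.isLt]

@[simp]
lemma bdig_twoPowSuccEquiv_inl (ρ : Fin (2 ^ n)) (j : ℕ) :
    bdig (twoPowSuccEquiv n (.inl ρ)) j = bdig ρ j := by
  simp [bdig, twoPowSuccEquiv]

@[simp]
lemma bdig_twoPowSuccEquiv_inr_of_lt (ρ : Fin (2 ^ n)) {j : ℕ} (hj : j < n) :
    bdig (twoPowSuccEquiv n (.inr ρ)) j = bdig ρ j := by
  simp [bdig, twoPowSuccEquiv, add_comm _ (2 ^ n), Nat.testBit_two_pow_add_gt hj]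

@[simp]
lemma bdig_twoPowSuccEquiv_inr_self (ρ : Fin (2 ^ n)) :
    bdig (twoPowSuccEquiv n (.inr ρ)) n = 1 := by
  simp [bdig, twoPowSuccEquiv, add_comm _ (2 ^ n), Nat.testBit_two_pow_add_eq,
    Nat.testBit_lt_two_pow ρ.isLt]

lemma forall_bdig_eq_iff (ρ η : Fin (2 ^ n)) :
    (∀ k : Fin n, bdig ρ k = bdig η k) ↔ ρ = η := by
  refine ⟨fun h => Fin.ext (Nat.eq_of_testBit_eq fun k => ?_), fun h _ => h ▸ rfl⟩
  rcases lt_or_ge k n with hk | hk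
  · have := h ⟨k, hk⟩
    simp only [bdig] at this
    split_ifs at this <;> simp_all
  · have hle := Nat.pow_le_pow_right two_pos hk
    rw [Nat.testBit_lt_two_pow (ρ.isLt.trans_le hle), Nat.testBit_lt_two_pow (η.isLt.trans_le hle)]

end Digits

lemma Umat_succ (n : ℕ) (ξ : Fin (n + 1) → ℝ) :
    Umat (n + 1) ξ = reindex (twoPowSuccEquiv n) (twoPowSuccEquiv n)
      (fromBlocks (Umat n fun j => ξ j.castSucc) 0 0
        (exp (I * ξ (Fin.last n)) • Umat n fun j => ξ j.castSucc)) :=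
  rfl

lemma Umat_eq_diagonal (n : ℕ) (ξ : Fin n → ℝ) :
    Umat n ξ = diagonal fun ρ => exp (I * ↑(∑ j : Fin n, (bdig ρ j : ℝ) * ξ j)) := by
  induction n with
  | zero => simp [Umat]
  | succ n ih =>
    rw [Umat_succ, ih, ← diagonal_smul, fromBlocks_diagonal, reindex_apply,
      submatrix_diagonal_equiv]
    congr 1
    funext ρ
    obtain ⟨x | x, rfl⟩ := (twoPowSuccEquiv n).surjective ρ
    · simp [Fin.sum_univ_castSucc]
    · simp [Fin.sum_univ_castSucc, ← exp_add]
      ring_nf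

/-- The amplitude `A` of the entry formula, for the digit strings `x = b(ρ)` and `y = b(η)`. -/
noncomputable def raiseSum {m : ℕ} (x y : Fin m → ℕ) (a : Fin m → ℂ) (γ : Fin m → Fin m → ℝ) : ℂ :=
  ∑ j : Fin m, if x j < y j ∧ ∀ k, k ≠ j → x k = y k then
    exp (I * ↑(∑ l : Fin m, if l < j then (x l : ℝ) * γ l j else 0)) * a j else 0

lemma raiseSum_succ {n : ℕ} (x y : Fin (n + 1) → ℕ) (a : Fin (n + 1) → ℂ)
    (γ : Fin (n + 1) → Fin (n + 1) → ℝ) :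
    raiseSum x y a γ =
      (if x (Fin.last n) = y (Fin.last n) then
        raiseSum (fun j => x j.castSucc) (fun j => y j.castSucc) (fun j => a j.castSucc)
          (fun j k => γ j.castSucc k.castSucc) else 0) +
      (if x (Fin.last n) < y (Fin.last n) ∧ ∀ k : Fin n, x k.castSucc = y k.castSucc then
        exp (I * ↑(∑ l : Fin n, (x l.castSucc : ℝ) * γ l.castSucc (Fin.last n))) * a (Fin.last n)
      else 0) := by
  rw [raiseSum, Fin.sum_univ_castSucc]
  congr 1
  · split_ifs with hlast
    · refine Finset.sum_congr rfl fun j _ => ?_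
      have hcond : (∀ k, k ≠ j.castSucc → x k = y k) ↔
          ∀ k : Fin n, k ≠ j → x k.castSucc = y k.castSucc := by
        simp [Fin.forall_fin_succ', hlast, (Fin.castSucc_lt_last j).ne', Fin.castSucc_inj]
      have hphase : (∑ l : Fin (n + 1), if l < j.castSucc then (x l : ℝ) * γ l j.castSucc else 0) =
          ∑ l : Fin n, if l < j then (x l.castSucc : ℝ) * γ l.castSucc j.castSucc else 0 := by
        simp [Fin.sum_univ_castSucc, (Fin.castSucc_lt_last j).not_gt]
      simp only [hcond, hphase]
    · refine Finset.sum_eq_zero fun j _ => if_neg fun h => hlast ?_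
      exact h.2 _ (Fin.castSucc_lt_last j).ne'
  · have hcond : (∀ k, k ≠ Fin.last n → x k = y k) ↔ ∀ k : Fin n, x k.castSucc = y k.castSucc := by
      simp [Fin.forall_fin_succ', (Fin.castSucc_lt_last _).ne]
    have hphase : (∑ l : Fin (n + 1), if l < Fin.last n then (x l : ℝ) * γ l (Fin.last n) else 0) =
        ∑ l : Fin n, (x l.castSucc : ℝ) * γ l.castSucc (Fin.last n) := by
      simp [Fin.sum_univ_castSucc, Fin.castSucc_lt_last]
    simp only [hcond, hphase]

noncomputable def raiseMat (n : ℕ) (a : Fin n → ℂ) (γ : Fin n → Fin n → ℝ) :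
    Matrix (Fin (2 ^ n)) (Fin (2 ^ n)) ℂ :=
  of fun ρ η => raiseSum (fun j => bdig ρ j) (fun j => bdig η j) a γ

lemma raiseMat_succ (n : ℕ) (a : Fin (n + 1) → ℂ) (γ : Fin (n + 1) → Fin (n + 1) → ℝ) :
    raiseMat (n + 1) a γ = reindex (twoPowSuccEquiv n) (twoPowSuccEquiv n)
      (fromBlocks (raiseMat n (fun j => a j.castSucc) fun j k => γ j.castSucc k.castSucc)
        (a (Fin.last n) • Umat n fun j => γ j.castSucc (Fin.last n)) 0
        (raiseMat n (fun j => a j.castSucc) fun j k => γ j.castSucc k.castSucc)) := by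
  ext ρ η
  obtain ⟨x, rfl⟩ := (twoPowSuccEquiv n).surjective ρ
  obtain ⟨y, rfl⟩ := (twoPowSuccEquiv n).surjective η
  rw [reindex_apply, submatrix_apply, Equiv.symm_apply_apply, Equiv.symm_apply_apply]
  rcases x with ρ | ρ <;> rcases y with η | η <;>
    simp [raiseMat, raiseSum_succ, forall_bdig_eq_iff, Umat_eq_diagonal, diagonal_apply, mul_comm]

lemma Mmat_succ (n : ℕ) (a : Fin (n + 1) → ℂ) (γ : Fin (n + 1) → Fin (n + 1) → ℝ) :
    Mmat (n + 1) a γ = reindex (twoPowSuccEquiv n) (twoPowSuccEquiv n)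
      (fromBlocks (Mmat n (fun j => a j.castSucc) fun j k => γ j.castSucc k.castSucc)
        (a (Fin.last n) • Umat n fun j => γ j.castSucc (Fin.last n))
        (star (a (Fin.last n)) • (Umat n fun j => γ j.castSucc (Fin.last n))ᴴ)
        (Mmat n (fun j => a j.castSucc) fun j k => γ j.castSucc k.castSucc)) :=
  rfl

lemma Mmat_eq_raiseMat_add_conjTranspose (n : ℕ) (a : Fin n → ℂ) (γ : Fin n → Fin n → ℝ) :
    Mmat n a γ = raiseMat n a γ + (raiseMat n a γ)ᴴ := by
  induction n with
  | zero => ext; simp [Mmat, raiseMat, raiseSum]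
  | succ n ih =>
    rw [Mmat_succ, raiseMat_succ, ih, conjTranspose_reindex, fromBlocks_conjTranspose,
      conjTranspose_smul, conjTranspose_zero]
    ext i j
    simp only [Matrix.add_apply, reindex_apply, submatrix_apply]
    rw [← Matrix.add_apply, fromBlocks_add, add_zero, zero_add]

lemma star_raiseSum {m : ℕ} (x y : Fin m → ℕ) (a : Fin m → ℂ) (γ : Fin m → Fin m → ℝ) :
    star (raiseSum y x a γ) = ∑ j : Fin m, if y j < x j ∧ ∀ k, k ≠ j → x k = y k then
      exp (-(I * ↑(∑ l : Fin m, if l < j then (y l : ℝ) * γ l j else 0))) * starRingEnd ℂ (a j)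
      else 0 := by
  rw [raiseSum, star_sum]
  refine Finset.sum_congr rfl fun j _ => ?_
  have hsymm : (∀ k, k ≠ j → y k = x k) ↔ ∀ k, k ≠ j → x k = y k :=
    forall_congr' fun k => imp_congr_right fun _ => eq_comm
  simp only [hsymm]
  split_ifs
  · rw [star_mul', Complex.star_def, ← exp_conj, map_mul, conj_I, conj_ofReal, neg_mul]
  · exact star_zero _

/-- The index `j` of each clause is necessarily unique, so each clause is a sum over `j`. -/
theorem Mmat_entry_general (n : ℕ) (a : Fin n → ℂ) (γ : Fin n → Fin n → ℝ)
    (ρ η : Fin (2 ^ n)) :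
    Mmat n a γ ρ η =
      (∑ j : Fin n,
          if bdig ρ j.val < bdig η j.val ∧ ∀ k : Fin n, k ≠ j → bdig ρ k.val = bdig η k.val then
            Complex.exp (Complex.I *
                Complex.ofReal (∑ l : Fin n, if l < j then (bdig ρ l.val : ℝ) * γ l j else 0)) *
              a j
          else 0) +
      (∑ j : Fin n,
          if bdig η j.val < bdig ρ j.val ∧ ∀ k : Fin n, k ≠ j → bdig ρ k.val = bdig η k.val then
            Complex.exp (-(Complex.I *
                Complex.ofReal (∑ l : Fin n, if l < j then (bdig η l.val : ℝ) * γ l j else 0))) *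
              (starRingEnd ℂ) (a j)
          else 0) := by
  rw [Mmat_eq_raiseMat_add_conjTranspose, Matrix.add_apply, conjTranspose_apply, raiseMat,
    of_apply, of_apply, star_raiseSum, raiseSum]

/-- Lemma 2.2 (1): the entry formula for `M_n`.  The index `j` in each clause is
necessarily unique, so the clauses are expressed as sums over `j` of the indicator of the
condition times the corresponding value. -/
theorem Mmat_entry (n : ℕ) (hn : 1 ≤ n) (a : Fin n → ℂ) (γ : Fin n → Fin n → ℝ)
    (ρ η : Fin (2 ^ n)) :
    Mmat n a γ ρ η =
      (∑ j : Fin n,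
          if bdig ρ j.val < bdig η j.val ∧ ∀ k : Fin n, k ≠ j → bdig ρ k.val = bdig η k.val then
            Complex.exp (Complex.I *
                Complex.ofReal (∑ l : Fin n, if l < j then (bdig ρ l.val : ℝ) * γ l j else 0)) *
              a j
          else 0) +
      (∑ j : Fin n,
          if bdig η j.val < bdig ρ j.val ∧ ∀ k : Fin n, k ≠ j → bdig ρ k.val = bdig η k.val then
            Complex.exp (-(Complex.I *
                Complex.ofReal (∑ l : Fin n, if l < j then (bdig η l.val : ℝ) * γ l j else 0))) *
              (starRingEnd ℂ) (a j)
          else 0) :=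
  Mmat_entry_general n a γ ρ η
end

section
/- For every k ∈ ℝ^d, ε ∈ ℝ^d and γ ∈ ℝ^{d(d−1)/2}: U_d(−(π/L)ε) · U_d(k) · E(ε,γ)(−k + (2π/L)ε) · U_d(k)^* · U_d(−(π/L)ε)^* = E(ε,γ)(k), where U_d(k) := U_d((k_1,…,k_d)), U_d(−(π/L)ε) := U_d((−(π/L)ε_1,…,−(π/L)ε_d)), and ^* denotes the conjugate transpose. -/
open Matrix

/-- The matrix `E(ε,γ)(k) := M_d((t_j (1+e^{i(π/L)ε_j - i k_j}) (1/2)^{[L=1]})_j, -γ)`. -/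
noncomputable def Emat (d L : ℕ) (t : Fin d → ℝ) (ε : Fin d → ℝ) (γ : Fin d → Fin d → ℝ)
    (k : Fin d → ℝ) : Matrix (Fin (2 ^ d)) (Fin (2 ^ d)) ℂ :=
  Mmat d
    (fun j => (t j : ℂ) *
      (1 + Complex.exp (Complex.I * Complex.ofReal (Real.pi / (L : ℝ) * ε j - k j))) *
      (if L = 1 then (1 / 2 : ℂ) else 1))
    (fun j l => -γ j l)


lemma Umat_mul (n : ℕ) (ξ η : Fin n → ℝ) :
    Umat n ξ * Umat n η = Umat n (fun j => ξ j + η j) := by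
  induction n with
  | zero => simp [Umat]
  | succ n ih =>
    simp only [Umat, Matrix.reindex_apply, Matrix.submatrix_mul_equiv,
      Matrix.fromBlocks_multiply, Matrix.mul_zero, Matrix.zero_mul, add_zero, zero_add,
      Matrix.smul_mul, Matrix.mul_smul, smul_smul, smul_zero, ← Complex.exp_add, ih]
    congr 3
    push_cast
    ring

lemma Umat_ct (n : ℕ) (ξ : Fin n → ℝ) : (Umat n ξ)ᴴ = Umat n (fun j => -ξ j) := by
  induction n with
  | zero => simp [Umat]
  | succ n ih =>
    simp only [Umat, Matrix.reindex_apply, Matrix.conjTranspose_submatrix,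
      Matrix.fromBlocks_conjTranspose, Matrix.conjTranspose_zero, Matrix.conjTranspose_smul, ih]
    congr 3
    rw [show star (Complex.exp (Complex.I * (ξ (Fin.last n) : ℂ))) =
        (starRingEnd ℂ) (Complex.exp (Complex.I * (ξ (Fin.last n) : ℂ))) from rfl,
      ← Complex.exp_conj]
    congr 1
    simp [Complex.conj_ofReal]

lemma Umat_zero (n : ℕ) : Umat n (fun _ => 0) = 1 := by
  induction n with
  | zero => simp [Umat]
  | succ n ih =>
    simp only [Umat, ih, Complex.ofReal_zero, mul_zero, Complex.exp_zero, one_smul,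
      Matrix.fromBlocks_one, Matrix.reindex_apply, Matrix.submatrix_one_equiv]

lemma Umat_comm_conj (n : ℕ) (ξ η : Fin n → ℝ) :
    Umat n ξ * Umat n η * Umat n (fun j => -ξ j) = Umat n η := by
  rw [Umat_mul, Umat_mul, show (fun j => (ξ j + η j) + -ξ j) = η from by funext j; ring]

lemma Umat_conj_Umat (n : ℕ) (ξ η : Fin n → ℝ) :
    Umat n ξ * Umat n η * (Umat n ξ)ᴴ = Umat n η := by
  rw [Umat_ct, Umat_comm_conj]

lemma Umat_conj_UmatH (n : ℕ) (ξ η : Fin n → ℝ) :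
    Umat n ξ * (Umat n η)ᴴ * (Umat n ξ)ᴴ = (Umat n η)ᴴ := by
  rw [Umat_ct n η, Umat_conj_Umat]

lemma Umat_conj_Mmat (n : ℕ) (ξ : Fin n → ℝ) (a : Fin n → ℂ) (γ : Fin n → Fin n → ℝ) :
    Umat n ξ * Mmat n a γ * (Umat n ξ)ᴴ =
      Mmat n (fun j => Complex.exp (-(Complex.I * (ξ j : ℂ))) * a j) γ := by
  induction n with
  | zero => simp [Mmat]
  | succ n ih =>
    rw [Umat_ct]
    simp only [Umat, Mmat, Matrix.reindex_apply, Matrix.submatrix_mul_equiv,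
      Matrix.fromBlocks_multiply, Matrix.mul_zero, Matrix.zero_mul, add_zero, zero_add,
      Matrix.smul_mul, Matrix.mul_smul, smul_smul, smul_zero]
    rw [← Umat_ct n fun j => ξ j.castSucc, ih, Umat_conj_Umat, Umat_conj_UmatH]
    have e1 : Complex.exp (Complex.I * ((-ξ (Fin.last n) : ℝ) : ℂ))
        = Complex.exp (-(Complex.I * (ξ (Fin.last n) : ℂ))) := by push_cast; ring_nf
    have e2 : (starRingEnd ℂ) (Complex.exp (-(Complex.I * (ξ (Fin.last n) : ℂ))))
        = Complex.exp (Complex.I * (ξ (Fin.last n) : ℂ)) := by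
      rw [← Complex.exp_conj]; congr 1; simp [Complex.conj_ofReal]
    have e3 : Complex.exp (-(Complex.I * (ξ (Fin.last n) : ℂ)))
        * Complex.exp (Complex.I * (ξ (Fin.last n) : ℂ)) = 1 := by
      rw [← Complex.exp_add]; simp
    simp [e1, e2, e3, _root_.map_mul, mul_comm]

lemma exp_helper (r t c : ℂ) :
    Complex.exp (Complex.I * r) * (t * (1 + Complex.exp (-(Complex.I * r))) * c)
      = t * (1 + Complex.exp (Complex.I * r)) * c := by
  have key : Complex.exp (Complex.I * r) * Complex.exp (-(Complex.I * r)) = 1 := by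
    rw [← Complex.exp_add]; simp
  linear_combination t * c * key

/-- Lemma 2.3 (2): the invariance
`U_d(-(π/L)ε) U_d(k) E(ε,γ)(-k + (2π/L)ε) U_d(k)^* U_d(-(π/L)ε)^* = E(ε,γ)(k)`. -/
theorem Emat_momentum_inversion (d L : ℕ) (hd : 2 ≤ d) (hL : 1 ≤ L) (t : Fin d → ℝ)
    (ht : ∀ j, 0 < t j) (k ε : Fin d → ℝ) (γ : Fin d → Fin d → ℝ) :
    Umat d (fun j => -(Real.pi / (L : ℝ) * ε j)) * Umat d k *
        Emat d L t ε γ (fun j => -k j + 2 * Real.pi / (L : ℝ) * ε j) *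
        (Umat d k)ᴴ * (Umat d (fun j => -(Real.pi / (L : ℝ) * ε j)))ᴴ =
      Emat d L t ε γ k := by
  have hrw : (Umat d k)ᴴ * (Umat d (fun j => -(Real.pi / (L : ℝ) * ε j)))ᴴ
      = (Umat d (fun j => -(Real.pi / (L : ℝ) * ε j)) * Umat d k)ᴴ :=
    (Matrix.conjTranspose_mul _ _).symm
  rw [mul_assoc (_ * _ * _), hrw, Umat_mul, mul_assoc, ← mul_assoc, Emat, Umat_conj_Mmat, Emat]
  refine congrFun (congrArg (Mmat d) ?_) _
  funext j
  rw [show -(Complex.I * ((-(Real.pi / (L : ℝ) * ε j) + k j : ℝ) : ℂ))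
      = Complex.I * ((Real.pi / (L : ℝ) * ε j - k j : ℝ) : ℂ) from by push_cast; ring,
    show Complex.I * ((Real.pi / (L : ℝ) * ε j - (-k j + 2 * Real.pi / (L : ℝ) * ε j) : ℝ) : ℂ)
      = -(Complex.I * ((Real.pi / (L : ℝ) * ε j - k j : ℝ) : ℂ)) from by push_cast; ring]
  exact exp_helper _ _ _
end

section
/- Let Δ := 1 − (1/2)·max_{m∈{1,…,d}}(Σ_{j=1}^{m−1}|1 + e^{iγ_{j,m}}| + Σ_{j=m+1}^{d}|1 + e^{iγ_{m,j}}|) and assume Δ ≥ 0. Then for every k ∈ ℝ^d, ε ∈ ℝ^d: inf over v ∈ ℂ^{2^d} with ‖v‖ = 1 of ‖E(ε,γ)(k)·v‖ is at least Δ^{1/2} · (1/2)·min_{j∈{1,…,d}} t_j · (Σ_{l=1}^{d} |1 + e^{i(π/L)ε_l − i k_l}|²)^{1/2}. -/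
open Matrix

/-!
Write `x = (x₁, x₂)` along the block decomposition `M_{n+1} = [[M, aW], [āW*, M]]`, where
`M = M_n` is Hermitian and `W = U_n(γ_{·,n+1})` is a diagonal unitary. Then
`‖M_{n+1} x‖² = ‖M x₁‖² + ‖M x₂‖² + |a|² ‖x‖² + 2 Re (a ⟪x₁, (M W + W M) x₂⟫)`.
A parallel induction bounds the anticommutator: `‖M_n U_n(ξ) + U_n(ξ) M_n‖ ≤ ∑ |a_j| |1 + e^{iξ_j}|`.
Together they give `‖M_n x‖² ≥ (∑ |a_j|² - ∑_{j<k} |a_j| |a_k| |1 + e^{iγ_{jk}}|) ‖x‖²`, and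
`|a_j| |a_k| ≤ (|a_j|² + |a_k|²) / 2` bounds the pair sum by `½ max_m (…) ∑ |a_j|²`.
-/

open scoped Matrix.Norms.L2Operator

local notation "‖" x "‖₂" => ‖(WithLp.toLp 2 x : EuclideanSpace ℂ _)‖

section EuclideanNorm

variable {l l' m n : Type*} [Fintype l] [Fintype l'] [Fintype m] [Fintype n]

lemma norm_toLp_sq (x : n → ℂ) : ‖x‖₂ ^ 2 = ∑ i, ‖x i‖ ^ 2 :=
  EuclideanSpace.norm_sq_eq _

lemma norm_toLp_sum_sq (x : m ⊕ n → ℂ) :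
    ‖x‖₂ ^ 2 = ‖x ∘ Sum.inl‖₂ ^ 2 + ‖x ∘ Sum.inr‖₂ ^ 2 := by
  simp only [norm_toLp_sq, Fintype.sum_sum_type, Function.comp_apply]

lemma norm_toLp_comp_equiv (e : m ≃ n) (x : n → ℂ) : ‖x ∘ e‖₂ = ‖x‖₂ := by
  rw [← sq_eq_sq₀ (norm_nonneg _) (norm_nonneg _), norm_toLp_sq, norm_toLp_sq]
  exact e.sum_comp fun i => ‖x i‖ ^ 2

lemma norm_toLp_add_sq (x y : n → ℂ) :
    ‖x + y‖₂ ^ 2 = ‖x‖₂ ^ 2 + ‖y‖₂ ^ 2 + 2 * (star x ⬝ᵥ y).re := by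
  rw [WithLp.toLp_add, norm_add_sq (𝕜 := ℂ), EuclideanSpace.inner_eq_star_dotProduct,
    dotProduct_comm, RCLike.re_to_complex]
  ring

lemma norm_star_dotProduct_le (x y : n → ℂ) : ‖star x ⬝ᵥ y‖ ≤ ‖x‖₂ * ‖y‖₂ := by
  have := norm_inner_le_norm (𝕜 := ℂ) (WithLp.toLp 2 x : EuclideanSpace ℂ n) (WithLp.toLp 2 y)
  rwa [EuclideanSpace.inner_eq_star_dotProduct, dotProduct_comm] at this

lemma norm_toLp_sumElim_le {p : m → ℂ} {q : n → ℂ} {y : l → ℂ} {z : l' → ℂ} {r : ℝ}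
    (hr : 0 ≤ r) (hp : ‖p‖₂ ≤ r * ‖y‖₂) (hq : ‖q‖₂ ≤ r * ‖z‖₂) :
    ‖Sum.elim p q‖₂ ≤ r * ‖Sum.elim y z‖₂ := by
  refine pow_le_pow_iff_left₀ (norm_nonneg _) (by positivity) two_ne_zero |>.mp ?_
  rw [mul_pow, norm_toLp_sum_sq, norm_toLp_sum_sq (Sum.elim y z)]
  simp only [Sum.elim_comp_inl, Sum.elim_comp_inr]
  nlinarith [pow_le_pow_left₀ (norm_nonneg _) hp 2, pow_le_pow_left₀ (norm_nonneg _) hq 2]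

lemma norm_toLp_submatrix_mulVec (A : Matrix m n ℂ) (e₁ : l ≃ m) (e₂ : l ≃ n) (x : l → ℂ) :
    ‖A.submatrix e₁ e₂ *ᵥ x‖₂ = ‖A *ᵥ (x ∘ e₂.symm)‖₂ := by
  rw [submatrix_mulVec_equiv, norm_toLp_comp_equiv]

lemma sq_norm_reindex_mulVec_ge {A : Matrix m m ℂ} {c : ℝ} (e : m ≃ n)
    (h : ∀ y, c * ‖y‖₂ ^ 2 ≤ ‖A *ᵥ y‖₂ ^ 2) (x : n → ℂ) :
    c * ‖x‖₂ ^ 2 ≤ ‖reindex e e A *ᵥ x‖₂ ^ 2 := by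
  rw [reindex_apply, norm_toLp_submatrix_mulVec, Equiv.symm_symm, ← norm_toLp_comp_equiv e x]
  exact h _

variable [DecidableEq n]

lemma norm_toLp_diagonal_mulVec {u : n → ℂ} (hu : ∀ i, ‖u i‖ = 1) (x : n → ℂ) :
    ‖diagonal u *ᵥ x‖₂ = ‖x‖₂ := by
  rw [← sq_eq_sq₀ (norm_nonneg _) (norm_nonneg _), norm_toLp_sq, norm_toLp_sq]
  simp [mulVec_diagonal, hu]

lemma norm_toLp_mulVec_le (A : Matrix m n ℂ) (x : n → ℂ) : ‖A *ᵥ x‖₂ ≤ ‖A‖ * ‖x‖₂ :=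
  l2_opNorm_mulVec A (WithLp.toLp 2 x)

lemma l2_opNorm_le_of_mulVec {A : Matrix m n ℂ} {s : ℝ} (hs : 0 ≤ s)
    (h : ∀ x, ‖A *ᵥ x‖₂ ≤ s * ‖x‖₂) : ‖A‖ ≤ s :=
  ContinuousLinearMap.opNorm_le_bound _ hs fun x => h x.ofLp

lemma l2_opNorm_diagonal_le_one {u : n → ℂ} (hu : ∀ i, ‖u i‖ = 1) : ‖diagonal u‖ ≤ 1 := by
  rw [l2_opNorm_diagonal]
  exact pi_norm_le_iff_of_nonneg zero_le_one |>.mpr fun i => (hu i).le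

variable [DecidableEq m]

lemma l2_opNorm_reindex_le (e : m ≃ n) (A : Matrix m m ℂ) : ‖reindex e e A‖ ≤ ‖A‖ :=
  l2_opNorm_le_of_mulVec (norm_nonneg A) fun x => by
    rw [reindex_apply, norm_toLp_submatrix_mulVec, ← norm_toLp_comp_equiv e.symm.symm x]
    exact norm_toLp_mulVec_le A _

lemma l2_opNorm_fromBlocks_diag_le (A : Matrix m m ℂ) (D : Matrix n n ℂ) :
    ‖fromBlocks A 0 0 D‖ ≤ max ‖A‖ ‖D‖ := by
  refine l2_opNorm_le_of_mulVec (le_max_of_le_left (norm_nonneg A)) fun x => ?_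
  simp only [fromBlocks_mulVec, zero_mulVec, add_zero, zero_add]
  conv_rhs => rw [← Sum.elim_comp_inl_inr x]
  exact norm_toLp_sumElim_le (le_max_of_le_left (norm_nonneg A))
    ((norm_toLp_mulVec_le A _).trans
      (mul_le_mul_of_nonneg_right (le_max_left _ _) (norm_nonneg _)))
    ((norm_toLp_mulVec_le D _).trans
      (mul_le_mul_of_nonneg_right (le_max_right _ _) (norm_nonneg _)))

lemma l2_opNorm_fromBlocks_antidiag_le (B : Matrix m n ℂ) (C : Matrix n m ℂ) :
    ‖fromBlocks 0 B C 0‖ ≤ max ‖B‖ ‖C‖ := by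
  refine l2_opNorm_le_of_mulVec (le_max_of_le_left (norm_nonneg B)) fun x => ?_
  simp only [fromBlocks_mulVec, zero_mulVec, add_zero, zero_add]
  rw [← norm_toLp_comp_equiv (Equiv.sumComm n m) x, ← Sum.elim_comp_inl_inr (x ∘ _)]
  exact norm_toLp_sumElim_le (le_max_of_le_left (norm_nonneg B))
    ((norm_toLp_mulVec_le B _).trans
      (mul_le_mul_of_nonneg_right (le_max_left _ _) (norm_nonneg _)))
    ((norm_toLp_mulVec_le C _).trans
      (mul_le_mul_of_nonneg_right (le_max_right _ _) (norm_nonneg _)))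

end EuclideanNorm

section BlockSteps

variable {n : Type*} [Fintype n]

lemma star_mulVec_dotProduct_add_eq_anticommutator {M : Matrix n n ℂ} (hM : M.IsHermitian)
    (W : Matrix n n ℂ) (α : ℂ) (x y : n → ℂ) :
    star (M *ᵥ x) ⬝ᵥ ((α • W) *ᵥ y) + star ((starRingEnd ℂ α • Wᴴ) *ᵥ x) ⬝ᵥ (M *ᵥ y) =
      α * (star x ⬝ᵥ ((M * W + W * M) *ᵥ y)) := by
  simp only [star_mulVec, dotProduct_mulVec, vecMul_vecMul, hM.eq, conjTranspose_smul,
    conjTranspose_conjTranspose, vecMul_smul, smul_vecMul, smul_dotProduct, add_mulVec,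
    dotProduct_add, ← mulVec_mulVec, Complex.star_def, Complex.conj_conj, smul_eq_mul]
  ring

variable [DecidableEq n]

lemma fromBlocks_anticommutator {M U W : Matrix n n ℂ} (hUW : Commute U W)
    (hUW' : Commute U Wᴴ) (α c : ℂ) :
    fromBlocks M (α • W) (starRingEnd ℂ α • Wᴴ) M * fromBlocks U 0 0 (c • U) +
        fromBlocks U 0 0 (c • U) * fromBlocks M (α • W) (starRingEnd ℂ α • Wᴴ) M =
      fromBlocks (M * U + U * M) 0 0 (c • (M * U + U * M)) +
        fromBlocks 0 ((α * (1 + c)) • (W * U)) ((starRingEnd ℂ α * (1 + c)) • (Wᴴ * U)) 0 := by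
  simp only [fromBlocks_multiply, fromBlocks_add, mul_zero, zero_mul, add_zero, zero_add,
    Matrix.smul_mul, Matrix.mul_smul, hUW.eq, hUW'.eq]
  congr 1 <;> module

lemma l2_opNorm_fromBlocks_anticommutator_le {M U W : Matrix n n ℂ} (hUW : Commute U W)
    (hUW' : Commute U Wᴴ) (hU : ‖U‖ ≤ 1) (hW : ‖W‖ ≤ 1) (α : ℂ) {c : ℂ} (hc : ‖c‖ = 1) :
    ‖fromBlocks M (α • W) (starRingEnd ℂ α • Wᴴ) M * fromBlocks U 0 0 (c • U) +
        fromBlocks U 0 0 (c • U) * fromBlocks M (α • W) (starRingEnd ℂ α • Wᴴ) M‖ ≤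
      ‖M * U + U * M‖ + ‖α‖ * ‖1 + c‖ := by
  have hWU : ‖W * U‖ ≤ 1 := (l2_opNorm_mul W U).trans (mul_le_one₀ hW (norm_nonneg U) hU)
  have hWU' : ‖Wᴴ * U‖ ≤ 1 := by
    refine (l2_opNorm_mul _ U).trans (mul_le_one₀ ?_ (norm_nonneg U) hU)
    rwa [l2_opNorm_conjTranspose]
  have hαc : 0 ≤ ‖α‖ * ‖1 + c‖ := by positivity
  rw [fromBlocks_anticommutator hUW hUW']
  refine (norm_add_le _ _).trans (add_le_add ?_ ?_)
  · refine (l2_opNorm_fromBlocks_diag_le _ _).trans_eq ?_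
    rw [norm_smul, hc, one_mul, max_self]
  · refine (l2_opNorm_fromBlocks_antidiag_le _ _).trans (max_le ?_ ?_)
    · rw [norm_smul, norm_mul]
      exact mul_le_of_le_one_right hαc hWU
    · rw [norm_smul, norm_mul, Complex.norm_conj]
      exact mul_le_of_le_one_right hαc hWU'

lemma sq_norm_fromBlocks_mulVec_ge {M : Matrix n n ℂ} (hM : M.IsHermitian) {w : n → ℂ}
    (hw : ∀ i, ‖w i‖ = 1) (α : ℂ) {c : ℝ} (hc : ∀ x, c * ‖x‖₂ ^ 2 ≤ ‖M *ᵥ x‖₂ ^ 2)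
    (x : n ⊕ n → ℂ) :
    (c + ‖α‖ ^ 2 - ‖α‖ * ‖M * diagonal w + diagonal w * M‖) * ‖x‖₂ ^ 2 ≤
      ‖fromBlocks M (α • diagonal w) (starRingEnd ℂ α • (diagonal w)ᴴ) M *ᵥ x‖₂ ^ 2 := by
  rw [norm_toLp_sum_sq x, fromBlocks_mulVec, norm_toLp_sum_sq (Sum.elim _ _),
    Sum.elim_comp_inl, Sum.elim_comp_inr, norm_toLp_add_sq, norm_toLp_add_sq]
  set K := M * diagonal w + diagonal w * M
  set x₁ := x ∘ Sum.inl
  set x₂ := x ∘ Sum.inr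
  have h₁ : ‖(α • diagonal w) *ᵥ x₂‖₂ = ‖α‖ * ‖x₂‖₂ := by
    rw [smul_mulVec, WithLp.toLp_smul, norm_smul, norm_toLp_diagonal_mulVec hw]
  have h₂ : ‖(starRingEnd ℂ α • (diagonal w)ᴴ) *ᵥ x₁‖₂ = ‖α‖ * ‖x₁‖₂ := by
    rw [smul_mulVec, WithLp.toLp_smul, norm_smul, Complex.norm_conj, diagonal_conjTranspose,
      norm_toLp_diagonal_mulVec (by simpa using hw)]
  have hcross : ‖α * (star x₁ ⬝ᵥ (K *ᵥ x₂))‖ ≤ ‖α‖ * (‖x₁‖₂ * (‖K‖ * ‖x₂‖₂)) := by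
    rw [norm_mul]
    gcongr
    exact (norm_star_dotProduct_le _ _).trans
      (mul_le_mul_of_nonneg_left (norm_toLp_mulVec_le K x₂) (norm_nonneg _))
  have hre := congrArg Complex.re
    (star_mulVec_dotProduct_add_eq_anticommutator hM (diagonal w) α x₁ x₂)
  rw [Complex.add_re] at hre
  rw [h₁, h₂]
  nlinarith [hc x₁, hc x₂, Complex.abs_re_le_norm (α * (star x₁ ⬝ᵥ (K *ᵥ x₂))),
    neg_abs_le (α * (star x₁ ⬝ᵥ (K *ᵥ x₂))).re, two_mul_le_add_sq ‖x₁‖₂ ‖x₂‖₂,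
    mul_nonneg (norm_nonneg α) (norm_nonneg K)]

end BlockSteps

lemma norm_exp_I_mul_ofReal (x : ℝ) : ‖Complex.exp (Complex.I * x)‖ = 1 := by
  rw [mul_comm, Complex.norm_exp_ofReal_mul_I]

lemma norm_one_add_exp_I_mul_neg (x : ℝ) :
    ‖1 + Complex.exp (Complex.I * ((-x : ℝ) : ℂ))‖ = ‖1 + Complex.exp (Complex.I * x)‖ := by
  rw [← Complex.norm_conj, map_add, map_one, ← Complex.exp_conj, map_mul, Complex.conj_I,
    Complex.conj_ofReal, Complex.ofReal_neg, mul_neg, neg_mul, neg_neg]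

theorem exists_Umat_eq_diagonal (n : ℕ) (ξ : Fin n → ℝ) :
    ∃ u : Fin (2 ^ n) → ℂ, (∀ i, ‖u i‖ = 1) ∧ Umat n ξ = diagonal u := by
  induction n with
  | zero => exact ⟨fun _ => 1, fun _ => norm_one, by rw [Umat, diagonal_one]⟩
  | succ n ih =>
    obtain ⟨u, hu, hU⟩ := ih fun j => ξ j.castSucc
    set c := Complex.exp (Complex.I * ξ (Fin.last n))
    have hunit : ∀ x, ‖Sum.elim u (c • u) x‖ = 1 := by
      rintro (j | j)
      · exact hu j
      · rw [Sum.elim_inr, Pi.smul_apply, smul_eq_mul, norm_mul, norm_exp_I_mul_ofReal, hu,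
          one_mul]
    refine ⟨fun i => Sum.elim u (c • u)
      ((finSumFinEquiv.trans (finCongr (by rw [pow_succ, mul_two]))).symm i),
      fun i => hunit _, ?_⟩
    rw [Umat, hU, ← diagonal_smul, fromBlocks_diagonal, reindex_apply, submatrix_diagonal_equiv]
    rfl

theorem Mmat_isHermitian (n : ℕ) (a : Fin n → ℂ) (γ : Fin n → Fin n → ℝ) :
    (Mmat n a γ).IsHermitian := by
  induction n with
  | zero => exact isHermitian_zero
  | succ n ih =>
    rw [Mmat, reindex_apply]
    refine IsHermitian.submatrix (IsHermitian.fromBlocks (ih _ _) ?_ (ih _ _)) _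
    rw [conjTranspose_smul]
    rfl

theorem l2_opNorm_Mmat_anticommutator_Umat_le (n : ℕ) (a : Fin n → ℂ) (γ : Fin n → Fin n → ℝ)
    (ξ : Fin n → ℝ) :
    ‖Mmat n a γ * Umat n ξ + Umat n ξ * Mmat n a γ‖ ≤
      ∑ j, ‖a j‖ * ‖1 + Complex.exp (Complex.I * ξ j)‖ := by
  induction n with
  | zero => simp [Mmat]
  | succ n ih =>
    obtain ⟨u, hu, hU⟩ := exists_Umat_eq_diagonal n fun j => ξ j.castSucc
    obtain ⟨w, hw, hW⟩ := exists_Umat_eq_diagonal n fun j => γ j.castSucc (Fin.last n)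
    have hcomm' : Commute (diagonal u) (diagonal w)ᴴ := by
      rw [diagonal_conjTranspose]
      exact commute_diagonal u _
    rw [Fin.sum_univ_castSucc, Mmat, Umat, ← coe_reindexAlgEquiv ℂ ℂ, ← map_mul, ← map_mul,
      ← map_add, coe_reindexAlgEquiv, hU, hW]
    refine (l2_opNorm_reindex_le _ _).trans <|
      (l2_opNorm_fromBlocks_anticommutator_le (commute_diagonal u w) hcomm'
        (l2_opNorm_diagonal_le_one hu) (l2_opNorm_diagonal_le_one hw) _
        (norm_exp_I_mul_ofReal _)).trans ?_
    rw [← hU]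
    exact add_le_add (ih _ _ _) le_rfl

lemma Fin.sum_sum_ite_lt_succ {β : Type*} [AddCommMonoid β] {n : ℕ}
    (g : Fin (n + 1) → Fin (n + 1) → β) :
    ∑ k, ∑ j, (if j < k then g j k else 0) =
      ∑ k : Fin n, ∑ j : Fin n, (if j < k then g j.castSucc k.castSucc else 0) +
        ∑ j : Fin n, g j.castSucc (Fin.last n) := by
  rw [Fin.sum_univ_castSucc]
  congr 1
  · refine Finset.sum_congr rfl fun k _ => ?_
    rw [Fin.sum_univ_castSucc]
    simp [Fin.castSucc_lt_castSucc_iff, (Fin.castSucc_lt_last k).not_gt]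
  · rw [Fin.sum_univ_castSucc]
    simp [Fin.castSucc_lt_last]

theorem sq_norm_Mmat_mulVec_ge (n : ℕ) (a : Fin n → ℂ) (γ : Fin n → Fin n → ℝ)
    (x : Fin (2 ^ n) → ℂ) :
    (∑ j, ‖a j‖ ^ 2 - ∑ k, ∑ j,
        if j < k then ‖a j‖ * ‖a k‖ * ‖1 + Complex.exp (Complex.I * γ j k)‖ else 0) *
      ‖x‖₂ ^ 2 ≤ ‖Mmat n a γ *ᵥ x‖₂ ^ 2 := by
  induction n with
  | zero => simp [Mmat]
  | succ n ih =>
    obtain ⟨w, hw, hW⟩ := exists_Umat_eq_diagonal n fun j => γ j.castSucc (Fin.last n)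
    have hK := l2_opNorm_Mmat_anticommutator_Umat_le n (fun j => a j.castSucc)
      (fun j k => γ j.castSucc k.castSucc) (fun j => γ j.castSucc (Fin.last n))
    rw [hW] at hK
    rw [Mmat, hW]
    refine le_trans (mul_le_mul_of_nonneg_right ?_ (sq_nonneg _)) <|
      sq_norm_reindex_mulVec_ge _ (sq_norm_fromBlocks_mulVec_ge (Mmat_isHermitian n _ _) hw
        (a (Fin.last n)) (ih (fun j => a j.castSucc) (fun j k => γ j.castSucc k.castSucc))) x
    have hlast : ∑ j : Fin n, ‖a j.castSucc‖ * ‖a (Fin.last n)‖ *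
          ‖1 + Complex.exp (Complex.I * γ j.castSucc (Fin.last n))‖ =
        ‖a (Fin.last n)‖ * ∑ j : Fin n, ‖a j.castSucc‖ *
          ‖1 + Complex.exp (Complex.I * γ j.castSucc (Fin.last n))‖ := by
      rw [Finset.mul_sum]
      exact Finset.sum_congr rfl fun j _ => by ring
    rw [Fin.sum_univ_castSucc, Fin.sum_sum_ite_lt_succ, hlast]
    linarith [mul_le_mul_of_nonneg_left hK (norm_nonneg (a (Fin.last n)))]

lemma sum_sum_ite_lt_mul_le {d : ℕ} (x : Fin d → ℝ) {w : Fin d → Fin d → ℝ}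
    (hw : ∀ j k, 0 ≤ w j k) :
    ∑ k, ∑ j, (if j < k then x j * x k * w j k else 0) ≤
      (1 / 2) * (∑ m, x m ^ 2) *
        ⨆ m, ((∑ j, if j < m then w j m else 0) + ∑ j, if m < j then w m j else 0) := by
  set g := fun m => (∑ j, if j < m then w j m else 0) + ∑ j, if m < j then w m j else 0
  calc ∑ k, ∑ j, (if j < k then x j * x k * w j k else 0)
      ≤ ∑ k, ∑ j, (if j < k then (x k ^ 2 + x j ^ 2) / 2 * w j k else 0) := by
        gcongr with k _ j _
        split_ifs
        · exact mul_le_mul_of_nonneg_right (by nlinarith [sq_nonneg (x j - x k)]) (hw j k)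
        · exact le_rfl
    _ = (1 / 2) * ∑ m, x m ^ 2 * g m := by
        simp only [g, mul_add, Finset.mul_sum, add_div, add_mul, ite_add_zero,
          Finset.sum_add_distrib, mul_ite, mul_zero]
        rw [Finset.sum_comm (f := fun k j => if j < k then x j ^ 2 / 2 * w j k else 0)]
        congr 1 <;> refine Finset.sum_congr rfl fun _ _ => Finset.sum_congr rfl fun _ _ => ?_ <;>
          split_ifs <;> ring
    _ ≤ (1 / 2) * ∑ m, x m ^ 2 * ⨆ m, g m := by
        gcongr with m
        exact le_ciSup (Finite.bddAbove_range g) m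
    _ = _ := by rw [← Finset.sum_mul, mul_assoc]

lemma sq_half_iInf_mul_sum_sq_le {d : ℕ} {t : Fin d → ℝ} (ht : ∀ j, 0 < t j) (z : Fin d → ℂ)
    {c : ℂ} (hc : 1 / 2 ≤ ‖c‖) :
    ((1 / 2) * ⨅ j, t j) ^ 2 * ∑ l, ‖z l‖ ^ 2 ≤ ∑ l, ‖(t l : ℂ) * z l * c‖ ^ 2 := by
  rw [Finset.mul_sum]
  gcongr with l
  have hinf : 0 ≤ ⨅ j, t j := Real.iInf_nonneg fun j => (ht j).le
  have hle : (1 / 2) * ⨅ j, t j ≤ t l * ‖c‖ := by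
    nlinarith [ciInf_le (Finite.bddBelow_range t) l, ht l]
  rw [norm_mul, norm_mul, Complex.norm_real, Real.norm_of_nonneg (ht l).le, ← mul_pow,
    mul_right_comm (t l)]
  exact pow_le_pow_left₀ (by positivity) (mul_le_mul_of_nonneg_right hle (norm_nonneg _)) 2

theorem Emat_inf_ge_general (d L : ℕ) (t : Fin d → ℝ)
    (ht : ∀ j, 0 < t j) (ε : Fin d → ℝ) (γ : Fin d → Fin d → ℝ)
    (hΔ : 0 ≤ 1 - (1 / 2 : ℝ) *
        ⨆ m : Fin d,
          ((∑ j : Fin d,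
              if j < m then ‖1 + Complex.exp (Complex.I * (γ j m : ℂ))‖ else 0) +
            ∑ j : Fin d,
              if m < j then ‖1 + Complex.exp (Complex.I * (γ m j : ℂ))‖ else 0))
    (k : Fin d → ℝ) :
    Real.sqrt (1 - (1 / 2 : ℝ) *
        ⨆ m : Fin d,
          ((∑ j : Fin d,
              if j < m then ‖1 + Complex.exp (Complex.I * (γ j m : ℂ))‖ else 0) +
            ∑ j : Fin d,
              if m < j then ‖1 + Complex.exp (Complex.I * (γ m j : ℂ))‖ else 0)) *
        ((1 / 2) * ⨅ j : Fin d, t j) *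
        Real.sqrt (∑ l : Fin d,
          ‖1 + Complex.exp (Complex.I *
            Complex.ofReal (Real.pi / (L : ℝ) * ε l - k l))‖ ^ 2) ≤
      sInf {r : ℝ | ∃ v : EuclideanSpace ℂ (Fin (2 ^ d)),
        ‖v‖ = 1 ∧ r = ‖Matrix.toEuclideanLin (Emat d L t ε γ k) v‖} := by
  set G := ⨆ m : Fin d, ((∑ j : Fin d,
      if j < m then ‖1 + Complex.exp (Complex.I * (γ j m : ℂ))‖ else 0) +
    ∑ j : Fin d, if m < j then ‖1 + Complex.exp (Complex.I * (γ m j : ℂ))‖ else 0)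
  set z : Fin d → ℂ := fun l => 1 + Complex.exp (Complex.I *
    Complex.ofReal (Real.pi / (L : ℝ) * ε l - k l))
  set T := (1 / 2) * ⨅ j : Fin d, t j
  set a : Fin d → ℂ := fun j => (t j : ℂ) * z j * (if L = 1 then (1 / 2 : ℂ) else 1)
  have hT : 0 ≤ T := mul_nonneg (by norm_num) (Real.iInf_nonneg fun j => (ht j).le)
  have hamp : T ^ 2 * ∑ l, ‖z l‖ ^ 2 ≤ ∑ l, ‖a l‖ ^ 2 :=
    sq_half_iInf_mul_sum_sq_le ht z (by split_ifs <;> norm_num)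
  have hpairs := sum_sum_ite_lt_mul_le (fun j => ‖a j‖)
    (w := fun j m => ‖1 + Complex.exp (Complex.I * (γ j m : ℂ))‖) fun _ _ => norm_nonneg _
  have hlow : ∀ x, (1 - (1 / 2) * G) * (T ^ 2 * ∑ l, ‖z l‖ ^ 2) * ‖x‖₂ ^ 2 ≤
      ‖Emat d L t ε γ k *ᵥ x‖₂ ^ 2 := by
    intro x
    refine le_trans (mul_le_mul_of_nonneg_right ?_ (sq_nonneg _))
      (sq_norm_Mmat_mulVec_ge d a (fun j l => -γ j l) x)
    simp only [norm_one_add_exp_I_mul_neg]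
    nlinarith [mul_le_mul_of_nonneg_left hamp hΔ]
  refine le_csInf ⟨_, EuclideanSpace.single ⟨0, by positivity⟩ 1, by simp, rfl⟩ ?_
  rintro r ⟨v, hv, rfl⟩
  refine pow_le_pow_iff_left₀ (by positivity) (norm_nonneg _) two_ne_zero |>.mp ?_
  have hv' := hlow v.ofLp
  rw [WithLp.toLp_ofLp, hv, one_pow, mul_one] at hv'
  rw [mul_pow, mul_pow, Real.sq_sqrt hΔ, Real.sq_sqrt (by positivity), toLpLin_apply]
  linarith

/-- Lemma 2.3 (5): a lower bound on `inf_{‖v‖=1} ‖E(ε,γ)(k) v‖`. -/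
theorem Emat_inf_ge (d L : ℕ) (hd : 2 ≤ d) (hL : 1 ≤ L) (t : Fin d → ℝ)
    (ht : ∀ j, 0 < t j) (ε : Fin d → ℝ) (γ : Fin d → Fin d → ℝ)
    (hΔ : 0 ≤ 1 - (1 / 2 : ℝ) *
        ⨆ m : Fin d,
          ((∑ j : Fin d,
              if j < m then ‖1 + Complex.exp (Complex.I * (γ j m : ℂ))‖ else 0) +
            ∑ j : Fin d,
              if m < j then ‖1 + Complex.exp (Complex.I * (γ m j : ℂ))‖ else 0))
    (k : Fin d → ℝ) :
    Real.sqrt (1 - (1 / 2 : ℝ) *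
        ⨆ m : Fin d,
          ((∑ j : Fin d,
              if j < m then ‖1 + Complex.exp (Complex.I * (γ j m : ℂ))‖ else 0) +
            ∑ j : Fin d,
              if m < j then ‖1 + Complex.exp (Complex.I * (γ m j : ℂ))‖ else 0)) *
        ((1 / 2) * ⨅ j : Fin d, t j) *
        Real.sqrt (∑ l : Fin d,
          ‖1 + Complex.exp (Complex.I *
            Complex.ofReal (Real.pi / (L : ℝ) * ε l - k l))‖ ^ 2) ≤
      sInf {r : ℝ | ∃ v : EuclideanSpace ℂ (Fin (2 ^ d)),
        ‖v‖ = 1 ∧ r = ‖Matrix.toEuclideanLin (Emat d L t ε γ k) v‖} :=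
  Emat_inf_ge_general d L t ht ε γ hΔ k
end

section
/- For every x ∈ ℤ^d and every j ∈ {1,…,d}: Σ_{m=0}^{2L−1} φ(x + (m+1)·e_j, x + m·e_j) = ε_j^L · π (equality in ℝ). -/
open scoped Classical

/-- The phase function `φ : ℤ^d × ℤ^d → ℝ`. -/
noncomputable def phifn (d L : ℕ) (θ : Fin d → Fin d → ℝ) (ε : Fin d → ℝ)
    (x y : Fin d → ℤ) : ℝ :=
  if ∃ j : Fin d, ∀ l : Fin d, (2 * (L : ℤ)) ∣ (x l - y l - if l = j then 1 else 0) then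
    ∑ j : Fin d,
      if ∀ l : Fin d, (2 * (L : ℤ)) ∣ (x l - y l - if l = j then 1 else 0) then
        (-1 : ℝ) ^ (x j + 1) * (∑ l : Fin d, if l < j ∧ Odd (x l) then θ l j else 0) +
          (if Even (x j) then 1 else 0) * (Real.pi / (L : ℝ)) * ε j
      else 0
  else if ∃ j : Fin d, ∀ l : Fin d, (2 * (L : ℤ)) ∣ (x l - y l + if l = j then 1 else 0) then
    ∑ j : Fin d,
      if ∀ l : Fin d, (2 * (L : ℤ)) ∣ (x l - y l + if l = j then 1 else 0) then
        (-1 : ℝ) ^ (x j + 1) * (∑ l : Fin d, if l < j ∧ Odd (x l) then θ l j else 0) -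
          (if Odd (x j) then 1 else 0) * (Real.pi / (L : ℝ)) * ε j
      else 0
  else 0

/-- Pairing lemma: if consecutive pairs of terms sum to a constant `c`, the sum over
`range (2 * L)` is `L * c`. -/
lemma phifn_pair_sum (L : ℕ) (f : ℕ → ℝ) (c : ℝ) (h : ∀ k, f (2*k) + f (2*k+1) = c) :
    ∑ m ∈ Finset.range (2*L), f m = L * c := by
  induction L with
  | zero => simp
  | succ n ih =>
    have h2 : 2*(n+1) = (2*n)+1+1 := by ring
    rw [h2, Finset.sum_range_succ, Finset.sum_range_succ, ih]
    push_cast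
    rw [add_assoc, h n]; ring

/-- Evaluation of `phifn` on a single hop along direction `j`. -/
lemma phifn_eval (d L : ℕ) (hL : 1 ≤ L) (θ : Fin d → Fin d → ℝ) (ε : Fin d → ℝ)
    (x : Fin d → ℤ) (j : Fin d) (m : ℕ) :
    phifn d L θ ε (fun l => x l + ((m : ℤ) + 1) * if l = j then 1 else 0)
        (fun l => x l + (m : ℤ) * if l = j then 1 else 0)
      = (-1 : ℝ) ^ (x j + (m : ℤ) + 2) *
          (∑ l : Fin d, if l < j ∧ Odd (x l) then θ l j else 0) +
        (if Even (x j + (m : ℤ) + 1) then 1 else 0) * (Real.pi / (L : ℝ)) * ε j := by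
  unfold phifn
  have h1 : ∃ j' : Fin d, ∀ l : Fin d, (2 * (L : ℤ)) ∣
      ((x l + ((m : ℤ) + 1) * if l = j then 1 else 0)
        - (x l + (m : ℤ) * if l = j then 1 else 0) - if l = j' then 1 else 0) := by
    refine ⟨j, fun l => ?_⟩
    by_cases h : l = j <;> simp [h]
  rw [if_pos h1]
  rw [Fintype.sum_eq_single j]
  · rw [if_pos]
    · simp only [eq_self_iff_true, if_true, mul_one]
      rw [show x j + ((m : ℤ) + 1) + 1 = x j + (m : ℤ) + 2 by ring,
        show x j + ((m : ℤ) + 1) = x j + (m : ℤ) + 1 by ring]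
      congr 2
      apply Finset.sum_congr rfl
      intro l _
      by_cases hl : l < j
      · simp [hl, hl.ne]
      · simp [hl]
    · intro l
      by_cases h : l = j <;> simp [h]
  · intro j' hj'
    rw [if_neg]
    intro hall
    have := hall j
    simp [hj'.symm, Ne.symm hj'] at this
    have h2 := Int.le_of_dvd one_pos this
    omega

/-- The key computation for a pair of consecutive terms. -/
lemma phifn_pairgoal (S c e : ℝ) (a : ℤ) (k : ℕ) :
    ((-1 : ℝ) ^ (a + ((2*k : ℕ) : ℤ) + 2) * S +
      (if Even (a + ((2*k : ℕ) : ℤ) + 1) then 1 else 0) * c * e) +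
    ((-1 : ℝ) ^ (a + ((2*k+1 : ℕ) : ℤ) + 2) * S +
      (if Even (a + ((2*k+1 : ℕ) : ℤ) + 1) then 1 else 0) * c * e) = c * e := by
  push_cast
  have h1 : ((-1 : ℝ)) ^ (a + 2*(k:ℤ) + 2) = (-1) ^ a := by
    rw [show a + 2*(k:ℤ) + 2 = a + 2*((k:ℤ)+1) by ring, zpow_add₀ (by norm_num : (-1:ℝ) ≠ 0),
      zpow_mul]
    norm_num
  have h2 : ((-1 : ℝ)) ^ (a + (2*(k:ℤ) + 1) + 2) = -(-1) ^ a := by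
    rw [show a + (2*(k:ℤ)+1) + 2 = (a + 2*((k:ℤ)+1)) + 1 by ring,
      zpow_add_one₀ (by norm_num : (-1:ℝ) ≠ 0), zpow_add₀ (by norm_num : (-1:ℝ) ≠ 0), zpow_mul]
    norm_num
  rw [h1, h2]
  have h3 : Even (a + (2*(k:ℤ) + 1) + 1) ↔ ¬ Even (a + 2*(k:ℤ) + 1) := by
    rw [show a + (2*(k:ℤ)+1) + 1 = (a + 2*(k:ℤ)+1) + 1 by ring, Int.even_add_one]
  by_cases h : Even (a + 2*(k:ℤ) + 1)
  · rw [if_pos h, if_neg (by simpa [h3] using h)]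
    ring
  · rw [if_neg h, if_pos (h3.mpr h)]
    ring

/-- Lemma 2.5 (4): the flux of `φ` through the large circle in direction `j` equals
`ε_j π`. -/
theorem phifn_circle_flux (d L : ℕ) (hd : 2 ≤ d) (hL : 1 ≤ L)
    (θ : Fin d → Fin d → ℝ) (ε : Fin d → ℝ)
    (hε : ∀ j, ε j = 0 ∨ ε j = 1) (hε1 : L = 1 → ∀ j, ε j = 0)
    (x : Fin d → ℤ) (j : Fin d) :
    (∑ m ∈ Finset.range (2 * L),
        phifn d L θ ε (fun l => x l + ((m : ℤ) + 1) * if l = j then 1 else 0)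
          (fun l => x l + (m : ℤ) * if l = j then 1 else 0)) =
      ε j * Real.pi := by
  have hLR : (L : ℝ) ≠ 0 := by positivity
  calc ∑ m ∈ Finset.range (2 * L),
        phifn d L θ ε (fun l => x l + ((m : ℤ) + 1) * if l = j then 1 else 0)
          (fun l => x l + (m : ℤ) * if l = j then 1 else 0)
      = ∑ m ∈ Finset.range (2 * L),
          ((-1 : ℝ) ^ (x j + (m : ℤ) + 2) *
            (∑ l : Fin d, if l < j ∧ Odd (x l) then θ l j else 0) +
          (if Even (x j + (m : ℤ) + 1) then 1 else 0) * (Real.pi / (L : ℝ)) * ε j) :=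
        Finset.sum_congr rfl (fun m _ => phifn_eval d L hL θ ε x j m)
    _ = L * ((Real.pi / (L : ℝ)) * ε j) := by
        apply phifn_pair_sum
        intro k
        have := phifn_pairgoal (∑ l : Fin d, if l < j ∧ Odd (x l) then θ l j else 0)
          (Real.pi / (L : ℝ)) (ε j) (x j) k
        linarith [this]
    _ = ε j * Real.pi := by field_simp
end

section
/- Let d ∈ ℕ, let A_0, A_1, …, A_d, B, C ∈ ℝ with A_j ≥ 0, B ≥ 0, C ≥ 0, and let D ∈ ℝ with D > 0. Assume that A_j^n · B ≤ C · D^n · (n!)² for every j ∈ {0,1,…,d} and every n ∈ ℕ ∪ {0}. Then B ≤ 4·C·exp(−Σ_{j=0}^{d} (A_j / ((d+1)²·D))^{1/2}). -/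
/-!
Put `t = √(A_j / D)`, so that the hypothesis reads `t^(2n) B ≤ C (n!)²`. Since
`(2n)! ≥ 2^n (n!)²` (the central binomial coefficient is at least `2^n`), summing the even part
of the exponential series gives `B cosh t ≤ C ∑ 2^(-n) = 2C`, and `e^t ≤ 2 cosh t` yields
`B ≤ 4C e^(-t)`. Finally the sum in the exponent is `(∑_j √(A_j / D)) / (d+1)`, a mean of the
`t_j`, hence at most the largest of them.
-/

open Real Nat

theorem Nat.two_pow_le_centralBinom (n : ℕ) : 2 ^ n ≤ centralBinom n := by
  induction n with
  | zero => simp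
  | succ n ih =>
    refine Nat.le_of_mul_le_mul_left ?_ n.succ_pos
    rw [succ_mul_centralBinom_succ]
    calc (n + 1) * 2 ^ (n + 1) = 2 * (n + 1) * 2 ^ n := by ring
      _ ≤ 2 * (2 * n + 1) * centralBinom n := by gcongr; omega

theorem Nat.two_pow_mul_factorial_sq_le (n : ℕ) : 2 ^ n * n ! ^ 2 ≤ (2 * n)! := by
  have h := choose_mul_factorial_mul_factorial (by omega : n ≤ 2 * n)
  rw [← centralBinom_eq_two_mul_choose, show 2 * n - n = n by omega] at h
  calc 2 ^ n * n ! ^ 2 ≤ centralBinom n * n ! * n ! := by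
        rw [sq, ← mul_assoc]; gcongr; exact two_pow_le_centralBinom n
    _ = (2 * n)! := h

theorem mul_cosh_le_of_pow_mul_le {t B C : ℝ} (hB : 0 ≤ B)
    (h : ∀ n : ℕ, t ^ (2 * n) * B ≤ C * (n ! : ℝ) ^ 2) : B * cosh t ≤ 2 * C := by
  have hC : 0 ≤ C := hB.trans (by simpa using h 0)
  have hgeom : HasSum (fun n : ℕ => C * (1 / 2) ^ n) (2 * C) := by
    simpa [mul_comm] using (hasSum_geometric_two).mul_left C
  refine hasSum_le (fun n => ?_) ((hasSum_cosh t).mul_left B) hgeom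
  have hfac : (2 ^ n * n ! ^ 2 : ℝ) ≤ (2 * n)! := mod_cast two_pow_mul_factorial_sq_le n
  rw [mul_div_assoc', div_le_iff₀ (by positivity)]
  calc B * t ^ (2 * n) ≤ C * n ! ^ 2 := by linarith [h n]
    _ = C * (1 / 2) ^ n * (2 ^ n * n ! ^ 2) := by rw [one_div_pow]; field_simp
    _ ≤ C * (1 / 2) ^ n * (2 * n)! := by gcongr

theorem le_mul_exp_neg_of_pow_mul_le {t B C : ℝ} (hB : 0 ≤ B)
    (h : ∀ n : ℕ, t ^ (2 * n) * B ≤ C * (n ! : ℝ) ^ 2) : B ≤ 4 * C * exp (-t) := by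
  have hcosh : exp t ≤ 2 * cosh t := by rw [cosh_eq]; linarith [exp_pos (-t)]
  have hexp : B * exp t ≤ 4 * C :=
    calc B * exp t ≤ B * (2 * cosh t) := by gcongr
      _ ≤ 4 * C := by linarith [mul_cosh_le_of_pow_mul_le hB h]
  rwa [exp_neg, ← div_eq_mul_inv, le_div_iff₀ (exp_pos t)]

theorem le_mul_exp_neg_sum_div_card {ι : Type*} [Fintype ι] [Nonempty ι] {B K : ℝ}
    {t : ι → ℝ} (hK : 0 ≤ K) (h : ∀ i, B ≤ K * exp (-t i)) :
    B ≤ K * exp (-((∑ i, t i) / Fintype.card ι)) := by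
  obtain ⟨i₀, -, hi₀⟩ := Finset.exists_max_image Finset.univ t Finset.univ_nonempty
  have hmean : (∑ i, t i) / Fintype.card ι ≤ t i₀ := by
    rw [div_le_iff₀ (by exact_mod_cast Fintype.card_pos), mul_comm]
    simpa using Finset.sum_le_card_nsmul Finset.univ t (t i₀) hi₀
  calc B ≤ K * exp (-t i₀) := h i₀
    _ ≤ _ := by gcongr

/-- Lemma 7.2 (tool for decay bounds): if `A_j^n B ≤ C D^n (n!)²` for all `j` and `n`, then
`B ≤ 4 C exp(-Σ_j (A_j/((d+1)² D))^{1/2})`. -/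
theorem decay_bound_tool (d : ℕ) (A : Fin (d + 1) → ℝ) (B C D : ℝ)
    (hA : ∀ j, 0 ≤ A j) (hB : 0 ≤ B) (hC : 0 ≤ C) (hD : 0 < D)
    (h : ∀ (j : Fin (d + 1)) (n : ℕ), A j ^ n * B ≤ C * D ^ n * (n.factorial : ℝ) ^ 2) :
    B ≤ 4 * C *
      Real.exp (-(∑ j : Fin (d + 1), Real.sqrt (A j / (((d : ℝ) + 1) ^ 2 * D)))) := by
  set t : Fin (d + 1) → ℝ := fun j => √(A j / D)
  have hpow : ∀ j n, t j ^ (2 * n) * B ≤ C * (n ! : ℝ) ^ 2 := fun j n => by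
    rw [pow_mul, sq_sqrt (div_nonneg (hA j) hD.le), div_pow, div_mul_eq_mul_div,
      div_le_iff₀ (by positivity)]
    linarith [h j n]
  have hsum : ∑ j, √(A j / (((d : ℝ) + 1) ^ 2 * D)) =
      (∑ j, t j) / Fintype.card (Fin (d + 1)) := by
    rw [Finset.sum_div]
    refine Finset.sum_congr rfl fun j _ => ?_
    rw [Fintype.card_fin, mul_comm, ← div_div, sqrt_div' _ (by positivity),
      sqrt_sq (by positivity)]
    push_cast; rfl
  rw [hsum]
  exact le_mul_exp_neg_sum_div_card (by positivity) fun j =>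
    le_mul_exp_neg_of_pow_mul_le hB (hpow j)
end

section
/- Suppose n ∈ ℕ with n ≥ 2 and x_1, …, x_n ∈ Γ(2L) are such that for every j ∈ {1,…,n} there exists p ∈ {1,…,d} with x_j − x_{j+1} ≡ e_p or x_j − x_{j+1} ≡ −e_p componentwise mod 2L, where x_{n+1} := x_1. Then Σ_{j=1}^{n} (φ_1(x_{j+1}, x_j) − φ_2(x_{j+1}, x_j)) ≡ 0 (mod 2π), i.e. there exists m ∈ ℤ with Σ_{j=1}^{n} (φ_1(x_{j+1}, x_j) − φ_2(x_{j+1}, x_j)) = 2πm. -/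
/-!
Modulo `2π` the difference `Ψ = φ₁ - φ₂` is an antisymmetric, `2L`-periodic function on pairs of
lattice points whose plaquette sums and large-circle sums vanish. Vanishing plaquette sums make
the edge values `Ψ (x + e_p) x` a closed form on `ℤ^d`, hence the increments of a potential `F`,
built by integrating along one coordinate axis at a time. Periodicity of `Ψ` makes
`F (x + 2L e_j) - F x` independent of `x`; at `x = 0` it is a circle sum, so `F` is `2L`-periodic
as well. Each step of a nearest-neighbour loop on the torus then contributes `F x_{j+1} - F x_j`,
and the sum telescopes.
-/

open Finset Real

section Periods

variable {V α : Type*} [AddGroup V]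

def periodSubgroup (f : V → α) : AddSubgroup V where
  carrier := {v | ∀ x, f (x + v) = f x}
  zero_mem' := by simp
  add_mem' {v w} hv hw x := by rw [← add_assoc]; exact (hw (x + v)).trans (hv x)
  neg_mem' {v} hv x := by rw [← hv (x + -v), neg_add_cancel_right]

theorem mem_periodSubgroup {f : V → α} {v : V} :
    v ∈ periodSubgroup f ↔ ∀ x, f (x + v) = f x :=
  Iff.rfl

end Periods

theorem AddSubgroup.smul_mem_of_forall_smul_single_mem {ι : Type*} [Fintype ι] [DecidableEq ι]
    {S : AddSubgroup (ι → ℤ)} {a : ℤ} (h : ∀ i, a • Pi.single i 1 ∈ S) (c : ι → ℤ) :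
    a • c ∈ S := by
  have hc : a • c = ∑ i, c i • a • Pi.single i (1 : ℤ) := by
    ext l; simp [Finset.sum_apply, Pi.single_apply, mul_comm]
  rw [hc]
  exact S.sum_mem fun i _ => S.zsmul_mem (h i) _

theorem eq_apply_zero_of_forall_add_single_eq {ι α : Type*} [Fintype ι] [DecidableEq ι]
    {g : (ι → ℤ) → α} (h : ∀ x i, g (x + Pi.single i 1) = g x) (x : ι → ℤ) : g x = g 0 := by
  have hx : (1 : ℤ) • x ∈ periodSubgroup g :=
    AddSubgroup.smul_mem_of_forall_smul_single_mem
      (fun i => by simpa [mem_periodSubgroup] using fun x => h x i) x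
  simpa using mem_periodSubgroup.1 hx 0

theorem Fin.cons_add_single_zero {M : Type*} [AddZeroClass M] {d : ℕ} (t a : M)
    (y : Fin d → M) : (Fin.cons t y : Fin (d + 1) → M) + Pi.single 0 a = Fin.cons (t + a) y := by
  ext i; cases i using Fin.cases <;> simp

theorem Fin.cons_add_single_succ {M : Type*} [AddZeroClass M] {d : ℕ} (t a : M)
    (y : Fin d → M) (q : Fin d) :
    (Fin.cons t y : Fin (d + 1) → M) + Pi.single q.succ a = Fin.cons t (y + Pi.single q a) := by
  ext i; cases i using Fin.cases <;> simp [Pi.single_apply]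

variable {G : Type*} [AddCommGroup G]

theorem Int.exists_add_one_eq_add (f : ℤ → G) :
    ∃ A : ℤ → G, A 0 = 0 ∧ ∀ t, A (t + 1) = A t + f t := by
  refine ⟨fun t => ∑ i ∈ Ico 0 t, f i - ∑ i ∈ Ico t 0, f i, by simp, fun t => ?_⟩
  beta_reduce
  rcases le_or_gt 0 t with ht | ht
  · rw [← Order.succ_eq_add_one, ← insert_Ico_right_eq_Ico_succ ht, Order.succ_eq_add_one,
      sum_insert (by simp), Ico_eq_empty_of_le ht, Ico_eq_empty_of_le (by omega : 0 ≤ t + 1)]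
    simp only [sum_empty, sub_zero, add_comm]
  · rw [← insert_Ico_succ_left_eq_Ico ht, sum_insert (by simp), Order.succ_eq_add_one,
      Ico_eq_empty_of_le ht.le, Ico_eq_empty_of_le (by omega : t + 1 ≤ 0)]
    simp

theorem Int.eq_of_apply_zero_eq_of_add_one_sub_eq {A B : ℤ → G} (h0 : A 0 = B 0)
    (h : ∀ t, A (t + 1) - A t = B (t + 1) - B t) : A = B := by
  funext t
  induction t using Int.induction_on with
  | zero => exact h0
  | succ t ih => rw [← sub_add_cancel (A _) (A t), h, ih, sub_add_cancel]
  | pred t ih =>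
    have := h (-t - 1)
    rwa [sub_add_cancel, ih, sub_right_inj] at this

theorem exists_potential_of_closed {d : ℕ} (ω : (Fin d → ℤ) → Fin d → G)
    (hω : ∀ x p q, p ≠ q → ω x p + ω (x + Pi.single p 1) q = ω x q + ω (x + Pi.single q 1) p) :
    ∃ F : (Fin d → ℤ) → G, ∀ x p, F (x + Pi.single p 1) = F x + ω x p := by
  induction d with
  | zero => exact ⟨0, fun _ p => p.elim0⟩
  | succ d ih =>
    obtain ⟨F, hF⟩ := ih (fun y q => ω (Fin.cons 0 y) q.succ) fun y p q hpq => by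
      simpa only [Fin.cons_add_single_succ] using hω (Fin.cons 0 y) p.succ q.succ (by simpa)
    choose A hA0 hA using fun y => Int.exists_add_one_eq_add fun t => ω (Fin.cons t y) 0
    -- closedness in the planes spanned by `e₀` and `e_{q+1}` moves the axis integrals `A` sideways
    have hA_single : ∀ y q t,
        A (y + Pi.single q 1) t = A y t + (ω (Fin.cons t y) q.succ - ω (Fin.cons 0 y) q.succ) := by
      intro y q
      refine congrFun (Int.eq_of_apply_zero_eq_of_add_one_sub_eq (by simp [hA0]) fun t => ?_)
      have := hω (Fin.cons t y) 0 q.succ (Fin.succ_ne_zero q).symm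
      rw [Fin.cons_add_single_zero, Fin.cons_add_single_succ] at this
      simp only [hA]
      linear_combination (norm := abel) -this
    refine ⟨fun x => F (Fin.tail x) + A (Fin.tail x) (x 0), fun x p => ?_⟩
    obtain ⟨t, y, rfl⟩ : ∃ t y, x = Fin.cons t y := ⟨_, _, (Fin.cons_self_tail x).symm⟩
    cases p using Fin.cases with
    | zero => simp only [Fin.cons_add_single_zero, Fin.tail_cons, Fin.cons_zero, hA]; abel
    | succ q =>
      simp only [Fin.cons_add_single_succ, Fin.tail_cons, Fin.cons_zero, hF, hA_single]; abel

theorem potential_add_sub_potential {d : ℕ} {ω : (Fin d → ℤ) → Fin d → G}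
    {F : (Fin d → ℤ) → G} (hF : ∀ x p, F (x + Pi.single p 1) = F x + ω x p)
    {v : Fin d → ℤ} (hv : ∀ x p, ω (x + v) p = ω x p) (x : Fin d → ℤ) :
    F (x + v) - F x = F v - F 0 := by
  simpa using eq_apply_zero_of_forall_add_single_eq (g := fun x => F (x + v) - F x)
    (fun x p => by simp only [add_right_comm x, hF, hv]; abel) x

def TorusAdj {d : ℕ} (N : ℤ) (y z : Fin d → ℤ) : Prop :=
  ∃ p, (∀ l, N ∣ y l - z l - (Pi.single p 1 : Fin d → ℤ) l) ∨
    (∀ l, N ∣ y l - z l + (Pi.single p 1 : Fin d → ℤ) l)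

section Phase

variable {d : ℕ} (Ψ : (Fin d → ℤ) → (Fin d → ℤ) → G)

def plaquetteSum (x : Fin d → ℤ) (j k : Fin d) : G :=
  Ψ (x + Pi.single j 1) x + Ψ (x + Pi.single j 1 + Pi.single k 1) (x + Pi.single j 1) +
    Ψ (x + Pi.single k 1) (x + Pi.single j 1 + Pi.single k 1) + Ψ x (x + Pi.single k 1)

def circleSum (N : ℕ) (x : Fin d → ℤ) (j : Fin d) : G :=
  ∑ i ∈ range N, Ψ (x + ((i : ℤ) + 1) • Pi.single j 1) (x + (i : ℤ) • Pi.single j 1)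

variable {Ψ}

theorem closed_of_plaquetteSum_eq_zero (hanti : ∀ a b, Ψ a b + Ψ b a = 0)
    (hplaq : ∀ x j k, j < k → plaquetteSum Ψ x j k = 0) (x : Fin d → ℤ) {p q : Fin d}
    (hpq : p ≠ q) :
    Ψ (x + Pi.single p 1) x + Ψ (x + Pi.single p 1 + Pi.single q 1) (x + Pi.single p 1) =
      Ψ (x + Pi.single q 1) x + Ψ (x + Pi.single q 1 + Pi.single p 1) (x + Pi.single q 1) := by
  have key : ∀ j k, j < k →
      Ψ (x + Pi.single j 1) x + Ψ (x + Pi.single j 1 + Pi.single k 1) (x + Pi.single j 1) =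
        Ψ (x + Pi.single k 1) x + Ψ (x + Pi.single k 1 + Pi.single j 1) (x + Pi.single k 1) := by
    intro j k hjk
    have hP := hplaq x j k hjk
    rw [plaquetteSum] at hP
    rw [add_right_comm x (Pi.single k 1)]
    linear_combination (norm := abel) hP - hanti (x + Pi.single k 1) x -
      hanti (x + Pi.single j 1 + Pi.single k 1) (x + Pi.single k 1)
  rcases hpq.lt_or_gt with h | h
  · exact key p q h
  · exact (key q p h).symm

variable {F : (Fin d → ℤ) → G}

theorem potential_add_smul_single_sub
    (hF : ∀ x p, F (x + Pi.single p 1) = F x + Ψ (x + Pi.single p 1) x)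
    (x : Fin d → ℤ) (j : Fin d) (N : ℕ) :
    F (x + (N : ℤ) • Pi.single j 1) - F x = circleSum Ψ N x j := by
  induction N with
  | zero => simp [circleSum]
  | succ n ih =>
    rw [circleSum, sum_range_succ, ← circleSum, ← ih, Nat.cast_succ, add_smul, one_smul,
      ← add_assoc, hF]
    abel

theorem potential_add_smul_eq
    (hF : ∀ x p, F (x + Pi.single p 1) = F x + Ψ (x + Pi.single p 1) x)
    (N : ℕ) (hanti : ∀ a b, Ψ a b + Ψ b a = 0)
    (hper : ∀ a b c, Ψ (a + (N : ℤ) • c) b = Ψ a b) (hcirc : ∀ j, circleSum Ψ N 0 j = 0)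
    (x c : Fin d → ℤ) : F (x + (N : ℤ) • c) = F x := by
  have hper' : ∀ a b c, Ψ a (b + (N : ℤ) • c) = Ψ a b := fun a b c => by
    rw [← neg_eq_iff_add_eq_zero.2 (hanti _ _), hper, neg_eq_iff_add_eq_zero.2 (hanti _ _)]
  have hmem : ∀ j, (N : ℤ) • Pi.single j 1 ∈ periodSubgroup F := fun j y => by
    have h0 := potential_add_smul_single_sub hF 0 j N
    rw [zero_add, hcirc, sub_eq_zero] at h0
    have := potential_add_sub_potential hF
      (v := (N : ℤ) • Pi.single j 1) (fun z p => by simp only [add_right_comm z, hper, hper']) y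
    rwa [h0, sub_self, sub_eq_zero] at this
  exact mem_periodSubgroup.1 (AddSubgroup.smul_mem_of_forall_smul_single_mem hmem c) x

theorem apply_eq_potential_sub_of_torusAdj
    (hF : ∀ x p, F (x + Pi.single p 1) = F x + Ψ (x + Pi.single p 1) x)
    (N : ℕ) (hanti : ∀ a b, Ψ a b + Ψ b a = 0)
    (hper : ∀ a b c, Ψ (a + (N : ℤ) • c) b = Ψ a b) (hFper : ∀ x c, F (x + (N : ℤ) • c) = F x)
    {y z : Fin d → ℤ} (h : TorusAdj N y z) : Ψ z y = F z - F y := by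
  obtain ⟨p, h | h⟩ := h <;> choose c hc using h
  · have hz : z = y - Pi.single p 1 + (N : ℤ) • -c := by ext l; simp; linarith [hc l]
    have hedge := hF (y - Pi.single p 1) p
    rw [sub_add_cancel] at hedge
    rw [hz, hper, hFper]
    linear_combination (norm := abel) hanti (y - Pi.single p 1) y + hedge
  · have hz : z = y + Pi.single p 1 + (N : ℤ) • -c := by ext l; simp; linarith [hc l]
    rw [hz, hper, hFper, hF]
    abel

theorem sum_apply_perm_eq_zero_of_torusAdj {ι : Type*} [Fintype ι] (N : ℕ)
    (hanti : ∀ a b, Ψ a b + Ψ b a = 0) (hper : ∀ a b c, Ψ (a + (N : ℤ) • c) b = Ψ a b)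
    (hplaq : ∀ x j k, j < k → plaquetteSum Ψ x j k = 0) (hcirc : ∀ j, circleSum Ψ N 0 j = 0)
    (σ : Equiv.Perm ι) (x : ι → Fin d → ℤ) (hx : ∀ i, TorusAdj N (x i) (x (σ i))) :
    ∑ i, Ψ (x (σ i)) (x i) = 0 := by
  obtain ⟨F, hF⟩ := exists_potential_of_closed (fun z p => Ψ (z + Pi.single p 1) z)
    fun z p q => closed_of_plaquetteSum_eq_zero hanti hplaq z
  have hFper := potential_add_smul_eq hF N hanti hper hcirc
  simp only [fun i => apply_eq_potential_sub_of_torusAdj hF N hanti hper hFper (hx i),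
    sum_sub_distrib, Equiv.sum_comp σ (fun i => F (x i)), sub_self]

end Phase

theorem add_single_one_eq_ite {d : ℕ} (x : Fin d → ℤ) (j : Fin d) :
    x + Pi.single j 1 = fun l => x l + if l = j then 1 else 0 := by
  ext l; simp [Pi.single_apply]

theorem add_smul_single_one_eq_ite {d : ℕ} (x : Fin d → ℤ) (a : ℤ) (j : Fin d) :
    x + a • Pi.single j 1 = fun l => x l + a * if l = j then 1 else 0 := by
  ext l; simp [Pi.single_apply]

theorem AddCircle.coe_two_pi_eq_zero_iff (r : ℝ) :
    (r : AddCircle (2 * π)) = 0 ↔ ∃ m : ℤ, r = 2 * π * m := by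
  rw [AddCircle.coe_eq_zero_iff]
  simp [eq_comm, mul_comm]

theorem AddCircle.coe_two_pi_sub_eq_zero {r s : ℝ} (hr : ∃ m : ℤ, r = 2 * π * m)
    (hs : ∃ m : ℤ, s = 2 * π * m) : ((r - s : ℝ) : AddCircle (2 * π)) = 0 := by
  rw [coe_sub, (coe_two_pi_eq_zero_iff r).2 hr, (coe_two_pi_eq_zero_iff s).2 hs, sub_zero]

noncomputable def phaseDiff {α : Type*} (φ₁ φ₂ : α → α → ℝ) (a b : α) : AddCircle (2 * π) :=
  ((φ₁ a b - φ₂ a b : ℝ) : AddCircle (2 * π))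

section PhaseDiff

variable {α : Type*} {φ₁ φ₂ : α → α → ℝ}

theorem phaseDiff_add_phaseDiff_swap {a b : α} (h₁ : ∃ m : ℤ, φ₁ a b + φ₁ b a = 2 * π * m)
    (h₂ : ∃ m : ℤ, φ₂ a b + φ₂ b a = 2 * π * m) :
    phaseDiff φ₁ φ₂ a b + phaseDiff φ₁ φ₂ b a = 0 := by
  refine Eq.trans ?_ (AddCircle.coe_two_pi_sub_eq_zero h₁ h₂)
  simp only [phaseDiff, AddCircle.coe_add, AddCircle.coe_sub]
  abel

theorem phaseDiff_eq_of_sub {a a' b : α} (h₁ : ∃ m : ℤ, φ₁ a' b - φ₁ a b = 2 * π * m)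
    (h₂ : ∃ m : ℤ, φ₂ a' b - φ₂ a b = 2 * π * m) : phaseDiff φ₁ φ₂ a' b = phaseDiff φ₁ φ₂ a b := by
  rw [← sub_eq_zero]
  refine Eq.trans ?_ (AddCircle.coe_two_pi_sub_eq_zero h₁ h₂)
  simp only [phaseDiff, AddCircle.coe_sub]
  abel

end PhaseDiff

/-- Lemma B.1: for two admissible phases with the same plaquette fluxes and the same
fluxes through the large circles (mod 2π), the difference of the phases sums to `0`
(mod 2π) along any closed nearest-neighbor loop in `Γ(2L)`. -/
theorem phase_difference_circuit (d L : ℕ)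
    (φ₁ φ₂ : (Fin d → ℤ) → (Fin d → ℤ) → ℝ)
    -- `φ₁` is an admissible phase
    (h1anti : ∀ x y : Fin d → ℤ, ∃ m : ℤ, φ₁ x y + φ₁ y x = 2 * Real.pi * m)
    (h1per : ∀ (x y c : Fin d → ℤ), ∃ m : ℤ,
      φ₁ (fun j => x j + 2 * (L : ℤ) * c j) y - φ₁ x y = 2 * Real.pi * m)
    -- `φ₂` is an admissible phase
    (h2anti : ∀ x y : Fin d → ℤ, ∃ m : ℤ, φ₂ x y + φ₂ y x = 2 * Real.pi * m)
    (h2per : ∀ (x y c : Fin d → ℤ), ∃ m : ℤ,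
      φ₂ (fun j => x j + 2 * (L : ℤ) * c j) y - φ₂ x y = 2 * Real.pi * m)
    -- equal plaquette fluxes mod 2π
    (hplaq : ∀ (x : Fin d → ℤ) (j k : Fin d), j < k → ∃ m : ℤ,
      (φ₁ (fun l => x l + if l = j then 1 else 0) x +
          φ₁ (fun l => x l + (if l = j then 1 else 0) + if l = k then 1 else 0)
            (fun l => x l + if l = j then 1 else 0) +
          φ₁ (fun l => x l + if l = k then 1 else 0)
            (fun l => x l + (if l = j then 1 else 0) + if l = k then 1 else 0) +
          φ₁ x (fun l => x l + if l = k then 1 else 0)) -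
        (φ₂ (fun l => x l + if l = j then 1 else 0) x +
          φ₂ (fun l => x l + (if l = j then 1 else 0) + if l = k then 1 else 0)
            (fun l => x l + if l = j then 1 else 0) +
          φ₂ (fun l => x l + if l = k then 1 else 0)
            (fun l => x l + (if l = j then 1 else 0) + if l = k then 1 else 0) +
          φ₂ x (fun l => x l + if l = k then 1 else 0)) = 2 * Real.pi * m)
    -- equal fluxes through the large circles mod 2π
    (hcirc : ∀ (x : Fin d → ℤ) (j : Fin d), ∃ m : ℤ,
      (∑ i ∈ Finset.range (2 * L),
          φ₁ (fun l => x l + ((i : ℤ) + 1) * if l = j then 1 else 0)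
            (fun l => x l + (i : ℤ) * if l = j then 1 else 0)) -
        (∑ i ∈ Finset.range (2 * L),
          φ₂ (fun l => x l + ((i : ℤ) + 1) * if l = j then 1 else 0)
            (fun l => x l + (i : ℤ) * if l = j then 1 else 0)) = 2 * Real.pi * m)
    -- a closed nearest-neighbor loop in Γ(2L)
    (n : ℕ) (hn : 2 ≤ n) (x : Fin n → Fin d → ℤ)
    (hadj : ∀ i : Fin n, ∃ p : Fin d,
      (∀ l : Fin d, (2 * (L : ℤ)) ∣
          (x i l - x ⟨((i : ℕ) + 1) % n, Nat.mod_lt _ (by omega)⟩ l -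
            if l = p then 1 else 0)) ∨
      (∀ l : Fin d, (2 * (L : ℤ)) ∣
          (x i l - x ⟨((i : ℕ) + 1) % n, Nat.mod_lt _ (by omega)⟩ l +
            if l = p then 1 else 0))) :
    ∃ m : ℤ,
      (∑ i : Fin n,
          (φ₁ (x ⟨((i : ℕ) + 1) % n, Nat.mod_lt _ (by omega)⟩) (x i) -
            φ₂ (x ⟨((i : ℕ) + 1) % n, Nat.mod_lt _ (by omega)⟩) (x i))) =
        2 * Real.pi * m := by
  have hnext : ∀ i : Fin n,
      (⟨((i : ℕ) + 1) % n, Nat.mod_lt _ (by omega)⟩ : Fin n) = finRotate n i := fun i => by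
    rw [finRotate_apply]; ext; simp [Fin.val_add]
  simp only [hnext] at hadj ⊢
  refine (AddCircle.coe_two_pi_eq_zero_iff _).1 ?_
  have hper : ∀ a b c, phaseDiff φ₁ φ₂ (a + ((2 * L : ℕ) : ℤ) • c) b = phaseDiff φ₁ φ₂ a b :=
    fun a b c => by
      have hac : a + ((2 * L : ℕ) : ℤ) • c = fun j => a j + 2 * L * c j := by ext; simp
      rw [hac]
      exact phaseDiff_eq_of_sub (h1per a b c) (h2per a b c)
  have hplaq' : ∀ z j k, j < k → plaquetteSum (phaseDiff φ₁ φ₂) z j k = 0 := fun z j k hjk => by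
    refine Eq.trans ?_ ((AddCircle.coe_two_pi_eq_zero_iff _).2 (hplaq z j k hjk))
    simp only [plaquetteSum, phaseDiff, add_single_one_eq_ite, AddCircle.coe_add,
      AddCircle.coe_sub]
    abel
  have hcirc' : ∀ j, circleSum (phaseDiff φ₁ φ₂) (2 * L) 0 j = 0 := fun j => by
    refine Eq.trans ?_ ((AddCircle.coe_two_pi_eq_zero_iff _).2 (hcirc 0 j))
    simp only [circleSum, phaseDiff, add_smul_single_one_eq_ite, AddCircle.coe_sub,
      QuotientAddGroup.mk_sum, sum_sub_distrib]
  simpa [phaseDiff] using sum_apply_perm_eq_zero_of_torusAdj (2 * L)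
    (fun a b => phaseDiff_add_phaseDiff_swap (h1anti a b) (h2anti a b)) hper hplaq' hcirc'
    (finRotate n) x fun i => by simpa [TorusAdj, Pi.single_apply] using hadj i
end

section
/- There exists a function θ : Γ(2L) → ℝ such that for all x, y ∈ Γ(2L) for which there exists j ∈ {1,…,d} with x − y ≡ e_j or x − y ≡ −e_j componentwise mod 2L, one has φ_1(x,y) ≡ φ_2(x,y) + θ(x) − θ(y) (mod 2π). -/
namespace PhaseGaugeAux

def Per (a : ℝ) : Prop := ∃ m : ℤ, a = 2 * Real.pi * m

lemma per_zero : Per 0 := ⟨0, by simp⟩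

lemma per_add {a b : ℝ} (ha : Per a) (hb : Per b) : Per (a + b) := by
  obtain ⟨m, hm⟩ := ha
  obtain ⟨n, hn⟩ := hb
  exact ⟨m + n, by rw [hm, hn]; push_cast; ring⟩

lemma per_neg {a : ℝ} (ha : Per a) : Per (-a) := by
  obtain ⟨m, hm⟩ := ha
  exact ⟨-m, by rw [hm]; push_cast; ring⟩

lemma per_sub {a b : ℝ} (ha : Per a) (hb : Per b) : Per (a - b) := by
  have := per_add ha (per_neg hb)
  simpa [sub_eq_add_neg] using this

lemma per_eq {a b : ℝ} (ha : Per a) (h : a = b) : Per b := h ▸ ha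

lemma per_sum {ι : Type*} {s : Finset ι} {f : ι → ℝ} (h : ∀ i ∈ s, Per (f i)) :
    Per (∑ i ∈ s, f i) :=
  Finset.sum_induction f Per (fun _ _ => per_add) per_zero h

lemma dvd_small {t M : ℤ} (hM : 0 < M) (hd : M ∣ t) (h1 : -M < t) (h2 : t < M) : t = 0 := by
  obtain ⟨m, rfl⟩ := hd
  rcases lt_trichotomy m 0 with h | h | h
  · have hm1 : m ≤ -1 := by omega
    have := mul_le_mul_of_nonneg_left hm1 hM.le
    linarith
  · simp [h]
  · have hm1 : 1 ≤ m := h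
    have := mul_le_mul_of_nonneg_left hm1 hM.le
    linarith

lemma dvd_cases {t M : ℤ} (hM : 0 < M) (hd : M ∣ t) (h1 : -M ≤ t) (h2 : t < M) :
    t = 0 ∨ t = -M := by
  obtain ⟨m, rfl⟩ := hd
  rcases lt_trichotomy m 0 with h | h | h
  · have hm2 : -1 ≤ m := by
      by_contra hc
      push_neg at hc
      have hm3 : m ≤ -2 := by omega
      have := mul_le_mul_of_nonneg_left hm3 hM.le
      linarith
    have hm : m = -1 := by omega
    right; rw [hm]; ring
  · left; simp [h]
  · have := mul_le_mul_of_nonneg_left (show 1 ≤ m by omega) hM.le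
    linarith

variable {d : ℕ}

def step (j : Fin d) (x : Fin d → ℤ) : Fin d → ℤ := fun l => x l + if l = j then 1 else 0

def mstep (j : Fin d) (i : ℤ) (x : Fin d → ℤ) : Fin d → ℤ :=
  fun l => x l + i * if l = j then 1 else 0

def base (x : Fin d → ℤ) (n : ℕ) : Fin d → ℤ := fun l => if (l : ℕ) < n then x l else 0

lemma step_comm (j k : Fin d) (x : Fin d → ℤ) : step j (step k x) = step k (step j x) := by
  funext l; simp only [step]; ring

lemma mstep_zero (j : Fin d) (x : Fin d → ℤ) : mstep j 0 x = x := by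
  funext l; simp [mstep]

lemma step_mstep (k : Fin d) (i : ℤ) (y : Fin d → ℤ) :
    step k (mstep k i y) = mstep k (i + 1) y := by
  funext l; simp only [step, mstep]; split_ifs <;> ring

lemma mstep_step_comm (k j : Fin d) (i : ℤ) (y : Fin d → ℤ) :
    mstep k i (step j y) = step j (mstep k i y) := by
  funext l; simp only [step, mstep]; ring

lemma base_succ (x : Fin d → ℤ) (j : Fin d) :
    mstep j (x j) (base x (j : ℕ)) = base x ((j : ℕ) + 1) := by
  funext l
  by_cases hlj : l = j
  · subst hlj
    simp [mstep, base]
  · have hv : (l : ℕ) ≠ (j : ℕ) := fun h => hlj (Fin.ext h)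
    by_cases h2 : (l : ℕ) < (j : ℕ)
    · simp only [mstep, base, if_neg hlj, mul_zero, add_zero, if_pos h2,
        if_pos (show (l : ℕ) < (j : ℕ) + 1 by omega)]
    · simp only [mstep, base, if_neg hlj, mul_zero, add_zero, if_neg h2,
        if_neg (show ¬(l : ℕ) < (j : ℕ) + 1 by omega)]

def A (ψ : (Fin d → ℤ) → (Fin d → ℤ) → ℝ) (j : Fin d) (x : Fin d → ℤ) : ℝ := ψ (step j x) x

def Sfun (ψ : (Fin d → ℤ) → (Fin d → ℤ) → ℝ) (x : Fin d → ℤ) (k : Fin d) : ℝ :=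
  ∑ m ∈ Finset.range ((x k).toNat), A ψ k (mstep k (m : ℤ) (base x (k : ℕ)))

def theta (ψ : (Fin d → ℤ) → (Fin d → ℤ) → ℝ) (x : Fin d → ℤ) : ℝ :=
  ∑ k : Fin d, Sfun ψ x k

def Efun (ψ : (Fin d → ℤ) → (Fin d → ℤ) → ℝ) (x : Fin d → ℤ) (j : Fin d) (n : ℕ) : ℝ :=
  if n < (j : ℕ) then 0
  else if n = (j : ℕ) then A ψ j (base x (n + 1))
  else A ψ j (base x (n + 1)) - A ψ j (base x n)


lemma curl_lemma (ψ : (Fin d → ℤ) → (Fin d → ℤ) → ℝ)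
    (hanti : ∀ x y, Per (ψ x y + ψ y x))
    (hplaq : ∀ (x : Fin d → ℤ) (j k : Fin d), j < k →
      Per (ψ (step j x) x + ψ (step j (step k x)) (step j x) +
        ψ (step k x) (step j (step k x)) + ψ x (step k x))) :
    ∀ (j k : Fin d), j ≠ k → ∀ y,
      Per (A ψ k (step j y) - A ψ k y - (A ψ j (step k y) - A ψ j y)) := by
  have base : ∀ (j k : Fin d), j < k → ∀ y,
      Per (A ψ k (step j y) - A ψ k y - (A ψ j (step k y) - A ψ j y)) := by
    intro j k hjk y
    refine per_eq (per_sub (per_sub (hplaq y j k hjk)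
      (hanti (step k y) (step j (step k y)))) (hanti y (step k y))) ?_
    simp only [A]
    rw [step_comm j k y]
    ring
  intro j k hjk y
  rcases hjk.lt_or_gt with h | h
  · exact base j k h y
  · exact per_eq (per_neg (base k j h y)) (by ring)

lemma Esum (ψ : (Fin d → ℤ) → (Fin d → ℤ) → ℝ) (x : Fin d → ℤ) (j : Fin d) :
    ∀ N, (j : ℕ) < N → ∑ n ∈ Finset.range N, Efun ψ x j n = A ψ j (base x N) := by
  intro N
  induction N with
  | zero => intro h; exact absurd h (Nat.not_lt_zero _)
  | succ N ih =>
    intro h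
    rcases Nat.lt_or_ge (j : ℕ) N with h2 | h2
    · rw [Finset.sum_range_succ, ih h2]
      simp only [Efun]
      rw [if_neg (by omega), if_neg (by omega)]
      ring
    · have hNj : N = (j : ℕ) := by omega
      have hz : ∑ n ∈ Finset.range N, Efun ψ x j n = 0 :=
        Finset.sum_eq_zero (fun n hn => by
          simp only [Efun]
          rw [if_pos (by rw [Finset.mem_range] at hn; omega)])
      rw [Finset.sum_range_succ, hz, zero_add]
      simp only [Efun]
      rw [if_neg (by omega), if_pos hNj]


lemma key (ψ : (Fin d → ℤ) → (Fin d → ℤ) → ℝ)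
    (hanti : ∀ x y, Per (ψ x y + ψ y x))
    (hplaq : ∀ (x : Fin d → ℤ) (j k : Fin d), j < k →
      Per (ψ (step j x) x + ψ (step j (step k x)) (step j x) +
        ψ (step k x) (step j (step k x)) + ψ x (step k x)))
    (x : Fin d → ℤ) (hx : ∀ l, 0 ≤ x l) (j : Fin d) :
    Per (theta ψ (step j x) - theta ψ x - A ψ j x) := by
  classical
  have curl := curl_lemma ψ hanti hplaq
  have claim1 : ∀ k : Fin d,
      Per (Sfun ψ (step j x) k - Sfun ψ x k - Efun ψ x j (k : ℕ)) := by
    intro k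
    rcases lt_trichotomy ((k : ℕ)) ((j : ℕ)) with hlt | heq | hgt
    · -- k < j : the two inner sums agree, E = 0
      have hkj : k ≠ j := Fin.ne_of_val_ne (Nat.ne_of_lt hlt)
      have h1 : step j x k = x k := by simp [step, hkj]
      have h2 : base (step j x) (k : ℕ) = base x (k : ℕ) := by
        funext l
        simp only [base]
        split_ifs with h
        · have hlj : l ≠ j := Fin.ne_of_val_ne (by omega)
          simp [step, hlj]
        · rfl
      have hS : Sfun ψ (step j x) k = Sfun ψ x k := by simp only [Sfun, h1, h2]
      have hE : Efun ψ x j (k : ℕ) = 0 := by simp only [Efun]; rw [if_pos hlt]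
      rw [hS, hE, sub_self, zero_sub, neg_zero]
      exact per_zero
    · -- k = j
      have hkj : k = j := Fin.ext heq
      subst hkj
      have hsj : step k x k = x k + 1 := by simp [step]
      have hb : base (step k x) (k : ℕ) = base x (k : ℕ) := by
        funext l
        simp only [base]
        split_ifs with h
        · have hlj : l ≠ k := Fin.ne_of_val_ne (by omega)
          simp [step, hlj]
        · rfl
      have htn : (step k x k).toNat = (x k).toNat + 1 := by
        rw [hsj]; have := hx k; omega
      have hcast : (((x k).toNat : ℕ) : ℤ) = x k := Int.toNat_of_nonneg (hx k)
      have hE : Efun ψ x k (k : ℕ) = A ψ k (base x ((k : ℕ) + 1)) := by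
        simp [Efun]
      simp only [Sfun, htn, hb, Finset.sum_range_succ, hcast, base_succ, hE]
      exact per_eq per_zero (by ring)
    · -- j < k
      have hkj : k ≠ j := Fin.ne_of_val_ne (by omega)
      have hjk : j ≠ k := Fin.ne_of_val_ne (by omega)
      have h1 : step j x k = x k := by simp [step, hkj]
      have hb : base (step j x) (k : ℕ) = step j (base x (k : ℕ)) := by
        funext l
        by_cases h : (l : ℕ) < (k : ℕ)
        · simp only [base, step, if_pos h]
        · have hlj : l ≠ j := Fin.ne_of_val_ne (by omega)
          simp only [base, step, if_neg h, if_neg hlj, add_zero]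
      have hS' : Sfun ψ (step j x) k =
          ∑ m ∈ Finset.range ((x k).toNat),
            A ψ k (step j (mstep k (m : ℤ) (base x (k : ℕ)))) := by
        simp only [Sfun, h1, hb]
        exact Finset.sum_congr rfl (fun m _ => by rw [mstep_step_comm])
      have htel : ∑ m ∈ Finset.range ((x k).toNat),
          (A ψ j (mstep k ((m : ℤ) + 1) (base x (k : ℕ))) -
            A ψ j (mstep k (m : ℤ) (base x (k : ℕ))))
          = A ψ j (base x ((k : ℕ) + 1)) - A ψ j (base x (k : ℕ)) := by
        have h0 := Finset.sum_range_sub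
          (fun m : ℕ => A ψ j (mstep k (m : ℤ) (base x (k : ℕ)))) ((x k).toNat)
        rw [show (((x k).toNat : ℕ) : ℤ) = x k from Int.toNat_of_nonneg (hx k),
          show ((0 : ℕ) : ℤ) = (0 : ℤ) from rfl, mstep_zero, base_succ] at h0
        rw [← h0]
        refine Finset.sum_congr rfl (fun m _ => ?_)
        rw [show (((m + 1 : ℕ) : ℤ)) = (m : ℤ) + 1 from by push_cast; ring]
      have hE : Efun ψ x j (k : ℕ) =
          A ψ j (base x ((k : ℕ) + 1)) - A ψ j (base x (k : ℕ)) := by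
        simp only [Efun]
        rw [if_neg (by omega), if_neg (by omega)]
      rw [hS', hE, ← htel]
      simp only [Sfun]
      rw [← Finset.sum_sub_distrib, ← Finset.sum_sub_distrib]
      refine per_sum (fun m _ => ?_)
      refine per_eq (curl j k hjk (mstep k (m : ℤ) (base x (k : ℕ)))) ?_
      rw [step_mstep]
  have hsplit : ∑ k : Fin d, (Sfun ψ (step j x) k - Sfun ψ x k - Efun ψ x j (k : ℕ))
      = theta ψ (step j x) - theta ψ x - A ψ j x := by
    rw [Finset.sum_sub_distrib, Finset.sum_sub_distrib]
    have hEsum : ∑ k : Fin d, Efun ψ x j (k : ℕ) = A ψ j x := by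
      rw [Fin.sum_univ_eq_sum_range (fun n => Efun ψ x j n) d, Esum ψ x j d j.isLt]
      congr 1
      funext l
      simp [base, l.isLt]
    rw [hEsum]
    rfl
  exact per_eq (per_sum (fun k _ => claim1 k)) hsplit


lemma wrap (L : ℕ) (ψ : (Fin d → ℤ) → (Fin d → ℤ) → ℝ)
    (hanti : ∀ x y, Per (ψ x y + ψ y x))
    (hper : ∀ (j : Fin d) (x y : Fin d → ℤ), Per (ψ (mstep j (2 * (L : ℤ)) x) y - ψ x y))
    (hcirc : ∀ (x : Fin d → ℤ) (j : Fin d),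
      Per (∑ i ∈ Finset.range (2 * L), ψ (mstep j ((i : ℤ) + 1) x) (mstep j (i : ℤ) x)))
    (x : Fin d → ℤ) (_hx : ∀ l, 0 ≤ x l) (j : Fin d) (h0 : x j = 0) :
    Per (theta ψ (mstep j (2 * (L : ℤ)) x) - theta ψ x) := by
  classical
  have hAper : ∀ (k : Fin d) (y : Fin d → ℤ),
      Per (A ψ k (mstep j (2 * (L : ℤ)) y) - A ψ k y) := by
    intro k y
    have h1 := hper j (step k y) (mstep j (2 * (L : ℤ)) y)
    rw [mstep_step_comm] at h1
    have h2 := hanti (step k y) (mstep j (2 * (L : ℤ)) y)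
    have h3 := hper j y (step k y)
    have h4 := hanti y (step k y)
    refine per_eq (per_sub (per_sub (per_add h1 h2) h3) h4) ?_
    simp only [A]
    ring
  have claim : ∀ k : Fin d, Per (Sfun ψ (mstep j (2 * (L : ℤ)) x) k - Sfun ψ x k) := by
    intro k
    rcases lt_trichotomy ((k : ℕ)) ((j : ℕ)) with hlt | heq | hgt
    · have hkj : k ≠ j := Fin.ne_of_val_ne (Nat.ne_of_lt hlt)
      have h1 : mstep j (2 * (L : ℤ)) x k = x k := by simp [mstep, hkj]
      have h2 : base (mstep j (2 * (L : ℤ)) x) (k : ℕ) = base x (k : ℕ) := by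
        funext l
        simp only [base]
        split_ifs with h
        · have hlj : l ≠ j := Fin.ne_of_val_ne (by omega)
          simp [mstep, hlj]
        · rfl
      rw [show Sfun ψ (mstep j (2 * (L : ℤ)) x) k = Sfun ψ x k from by
        simp only [Sfun, h1, h2], sub_self]
      exact per_zero
    · have hkj : k = j := Fin.ext heq
      subst hkj
      have h1 : mstep k (2 * (L : ℤ)) x k = 2 * (L : ℤ) := by simp [mstep, h0]
      have h2 : base (mstep k (2 * (L : ℤ)) x) (k : ℕ) = base x (k : ℕ) := by
        funext l
        simp only [base]
        split_ifs with h
        · have hlj : l ≠ k := Fin.ne_of_val_ne (by omega)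
          simp [mstep, hlj]
        · rfl
      have htn : (mstep k (2 * (L : ℤ)) x k).toNat = 2 * L := by rw [h1]; omega
      have hS : Sfun ψ x k = 0 := by simp [Sfun, h0]
      rw [hS, sub_zero]
      simp only [Sfun, htn, h2]
      refine per_eq (hcirc (base x (k : ℕ)) k) ?_
      refine Finset.sum_congr rfl (fun m _ => ?_)
      simp only [A]
      rw [step_mstep]
    · have hkj : k ≠ j := Fin.ne_of_val_ne (by omega)
      have h1 : mstep j (2 * (L : ℤ)) x k = x k := by simp [mstep, hkj]
      have hb : base (mstep j (2 * (L : ℤ)) x) (k : ℕ) =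
          mstep j (2 * (L : ℤ)) (base x (k : ℕ)) := by
        funext l
        by_cases h : (l : ℕ) < (k : ℕ)
        · simp only [base, mstep, if_pos h]
        · have hlj : l ≠ j := Fin.ne_of_val_ne (by omega)
          simp only [base, mstep, if_neg h, if_neg hlj, mul_zero, add_zero]
      have hpt : ∀ m : ℕ, mstep k (m : ℤ) (mstep j (2 * (L : ℤ)) (base x (k : ℕ)))
          = mstep j (2 * (L : ℤ)) (mstep k (m : ℤ) (base x (k : ℕ))) :=
        fun m => funext fun l => by simp only [mstep]; ring
      simp only [Sfun, h1, hb]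
      rw [← Finset.sum_sub_distrib]
      refine per_sum (fun m _ => ?_)
      rw [hpt m]
      exact hAper k (mstep k (m : ℤ) (base x (k : ℕ)))
  have hsplit : ∑ k : Fin d, (Sfun ψ (mstep j (2 * (L : ℤ)) x) k - Sfun ψ x k)
      = theta ψ (mstep j (2 * (L : ℤ)) x) - theta ψ x := by
    rw [Finset.sum_sub_distrib]
    rfl
  exact per_eq (per_sum (fun k _ => claim k)) hsplit


lemma master (L : ℕ) (hL : 1 ≤ L) (ψ : (Fin d → ℤ) → (Fin d → ℤ) → ℝ)
    (hanti : ∀ x y, Per (ψ x y + ψ y x))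
    (hper : ∀ (j : Fin d) (x y : Fin d → ℤ), Per (ψ (mstep j (2 * (L : ℤ)) x) y - ψ x y))
    (hplaq : ∀ (x : Fin d → ℤ) (j k : Fin d), j < k →
      Per (ψ (step j x) x + ψ (step j (step k x)) (step j x) +
        ψ (step k x) (step j (step k x)) + ψ x (step k x)))
    (hcirc : ∀ (x : Fin d → ℤ) (j : Fin d),
      Per (∑ i ∈ Finset.range (2 * L), ψ (mstep j ((i : ℤ) + 1) x) (mstep j (i : ℤ) x))) :
    ∀ (x y : Fin d → ℤ) (j : Fin d),
      (∀ l, 0 ≤ x l ∧ x l < 2 * (L : ℤ)) → (∀ l, 0 ≤ y l ∧ y l < 2 * (L : ℤ)) →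
      (∀ l, (2 * (L : ℤ)) ∣ (x l - y l - if l = j then 1 else 0)) →
      Per (ψ x y - (theta ψ x - theta ψ y)) := by
  intro x y j hx hy hdvd
  have hM : (0 : ℤ) < 2 * (L : ℤ) := by
    have : (1 : ℤ) ≤ (L : ℤ) := by exact_mod_cast hL
    linarith
  have hxy : ∀ l, l ≠ j → x l = y l := by
    intro l hl
    have h := hdvd l
    rw [if_neg hl, sub_zero] at h
    have := dvd_small hM h (by linarith [(hx l).1, (hy l).2]) (by linarith [(hx l).2, (hy l).1])
    linarith
  have h := hdvd j
  rw [if_pos rfl] at h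
  rcases dvd_cases hM h (by linarith [(hx j).1, (hy j).2]) (by linarith [(hx j).2, (hy j).1])
    with hc | hc
  · -- x = step j y
    have hxe : x = step j y := by
      funext l
      by_cases hl : l = j
      · subst hl
        simp only [step, if_pos]
        omega
      · simp only [step, if_neg hl, add_zero]
        exact hxy l hl
    rw [hxe]
    have hk := key ψ hanti hplaq y (fun l => (hy l).1) j
    exact per_eq (per_neg hk) (by simp only [A]; ring)
  · -- wrap-around
    have h0 : x j = 0 := by linarith [(hx j).1, (hy j).2]
    have h1 : y j = 2 * (L : ℤ) - 1 := by linarith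
    have hstep : step j y = mstep j (2 * (L : ℤ)) x := by
      funext l
      by_cases hl : l = j
      · subst hl
        simp only [step, mstep, if_pos]
        omega
      · simp only [step, mstep, if_neg hl, add_zero, mul_zero]
        exact (hxy l hl).symm
    have hk := key ψ hanti hplaq y (fun l => (hy l).1) j
    have hw := wrap L ψ hanti hper hcirc x (fun l => (hx l).1) j h0
    have hp := hper j x y
    rw [← hstep] at hw hp
    refine per_eq (per_add (per_add (per_neg hp) (per_neg hk)) hw) ?_
    simp only [A]
    ring

end PhaseGaugeAux

open PhaseGaugeAux in
/-- Lemma B.2: two admissible phases with the same plaquette fluxes and the same fluxes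
through the large circles (mod 2π) differ, on nearest-neighbor pairs of `Γ(2L)`, by a
gauge `θ(x) - θ(y)` (mod 2π). -/
theorem phase_gauge_equivalence (d L : ℕ) (hd : 2 ≤ d) (hL : 1 ≤ L)
    (φ₁ φ₂ : (Fin d → ℤ) → (Fin d → ℤ) → ℝ)
    -- `φ₁` is an admissible phase
    (h1anti : ∀ x y : Fin d → ℤ, ∃ m : ℤ, φ₁ x y + φ₁ y x = 2 * Real.pi * m)
    (h1per : ∀ (x y c : Fin d → ℤ), ∃ m : ℤ,
      φ₁ (fun j => x j + 2 * (L : ℤ) * c j) y - φ₁ x y = 2 * Real.pi * m)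
    -- `φ₂` is an admissible phase
    (h2anti : ∀ x y : Fin d → ℤ, ∃ m : ℤ, φ₂ x y + φ₂ y x = 2 * Real.pi * m)
    (h2per : ∀ (x y c : Fin d → ℤ), ∃ m : ℤ,
      φ₂ (fun j => x j + 2 * (L : ℤ) * c j) y - φ₂ x y = 2 * Real.pi * m)
    -- equal plaquette fluxes mod 2π
    (hplaq : ∀ (x : Fin d → ℤ) (j k : Fin d), j < k → ∃ m : ℤ,
      (φ₁ (fun l => x l + if l = j then 1 else 0) x +
          φ₁ (fun l => x l + (if l = j then 1 else 0) + if l = k then 1 else 0)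
            (fun l => x l + if l = j then 1 else 0) +
          φ₁ (fun l => x l + if l = k then 1 else 0)
            (fun l => x l + (if l = j then 1 else 0) + if l = k then 1 else 0) +
          φ₁ x (fun l => x l + if l = k then 1 else 0)) -
        (φ₂ (fun l => x l + if l = j then 1 else 0) x +
          φ₂ (fun l => x l + (if l = j then 1 else 0) + if l = k then 1 else 0)
            (fun l => x l + if l = j then 1 else 0) +
          φ₂ (fun l => x l + if l = k then 1 else 0)
            (fun l => x l + (if l = j then 1 else 0) + if l = k then 1 else 0) +
          φ₂ x (fun l => x l + if l = k then 1 else 0)) = 2 * Real.pi * m)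
    -- equal fluxes through the large circles mod 2π
    (hcirc : ∀ (x : Fin d → ℤ) (j : Fin d), ∃ m : ℤ,
      (∑ i ∈ Finset.range (2 * L),
          φ₁ (fun l => x l + ((i : ℤ) + 1) * if l = j then 1 else 0)
            (fun l => x l + (i : ℤ) * if l = j then 1 else 0)) -
        (∑ i ∈ Finset.range (2 * L),
          φ₂ (fun l => x l + ((i : ℤ) + 1) * if l = j then 1 else 0)
            (fun l => x l + (i : ℤ) * if l = j then 1 else 0)) = 2 * Real.pi * m) :
    ∃ θ : (Fin d → ℤ) → ℝ, ∀ x y : Fin d → ℤ,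
      (∀ j, 0 ≤ x j ∧ x j < 2 * (L : ℤ)) → (∀ j, 0 ≤ y j ∧ y j < 2 * (L : ℤ)) →
      (∃ j : Fin d,
        (∀ l : Fin d, (2 * (L : ℤ)) ∣ (x l - y l - if l = j then 1 else 0)) ∨
        (∀ l : Fin d, (2 * (L : ℤ)) ∣ (x l - y l + if l = j then 1 else 0))) →
      ∃ m : ℤ, φ₁ x y - (φ₂ x y + θ x - θ y) = 2 * Real.pi * m := by
  classical
  set ψ : (Fin d → ℤ) → (Fin d → ℤ) → ℝ := fun x y => φ₁ x y - φ₂ x y with hψ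
  have hanti : ∀ x y, Per (ψ x y + ψ y x) := by
    intro x y
    obtain ⟨m1, h1⟩ := h1anti x y
    obtain ⟨m2, h2⟩ := h2anti x y
    exact ⟨m1 - m2, by simp only [hψ]; push_cast; linarith⟩
  have hper : ∀ (j : Fin d) (x y : Fin d → ℤ),
      Per (ψ (mstep j (2 * (L : ℤ)) x) y - ψ x y) := by
    intro j x y
    obtain ⟨m1, h1⟩ := h1per x y (fun l => if l = j then 1 else 0)
    obtain ⟨m2, h2⟩ := h2per x y (fun l => if l = j then 1 else 0)
    refine ⟨m1 - m2, ?_⟩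
    have e : mstep j (2 * (L : ℤ)) x
        = (fun l => x l + 2 * (L : ℤ) * if l = j then 1 else 0) := rfl
    simp only [hψ]
    rw [e]
    push_cast
    linarith
  have hplaq' : ∀ (x : Fin d → ℤ) (j k : Fin d), j < k →
      Per (ψ (step j x) x + ψ (step j (step k x)) (step j x) +
        ψ (step k x) (step j (step k x)) + ψ x (step k x)) := by
    intro x j k hjk
    obtain ⟨m, hm⟩ := hplaq x j k hjk
    refine ⟨m, ?_⟩
    have e1 : step j x = (fun l => x l + if l = j then 1 else 0) := rfl
    have e2 : step k x = (fun l => x l + if l = k then 1 else 0) := rfl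
    have e3 : step j (step k x) =
        (fun l => x l + (if l = j then 1 else 0) + if l = k then 1 else 0) := by
      funext l; simp only [step]; ring
    simp only [hψ]
    rw [e3, e1, e2]
    linarith
  have hcirc' : ∀ (x : Fin d → ℤ) (j : Fin d),
      Per (∑ i ∈ Finset.range (2 * L), ψ (mstep j ((i : ℤ) + 1) x) (mstep j (i : ℤ) x)) := by
    intro x j
    obtain ⟨m, hm⟩ := hcirc x j
    refine ⟨m, ?_⟩
    simp only [hψ, mstep]
    rw [Finset.sum_sub_distrib]
    exact hm
  have hθ := master L hL ψ hanti hper hplaq' hcirc'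
  refine ⟨theta ψ, ?_⟩
  intro x y hx hy hex
  obtain ⟨j, hj | hj⟩ := hex
  · obtain ⟨m, hm⟩ := hθ x y j hx hy hj
    refine ⟨m, ?_⟩
    simp only [hψ] at hm
    linarith
  · have hj' : ∀ l : Fin d, (2 * (L : ℤ)) ∣ (y l - x l - if l = j then 1 else 0) := by
      intro l
      have h2 : y l - x l - (if l = j then 1 else 0)
          = -(x l - y l + if l = j then 1 else 0) := by ring
      rw [h2]
      exact dvd_neg.mpr (hj l)
    obtain ⟨m1, hm1⟩ := hθ y x j hy hx hj'
    obtain ⟨m2, hm2⟩ := h1anti x y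
    obtain ⟨m3, hm3⟩ := h2anti x y
    refine ⟨m2 - m3 - m1, ?_⟩
    simp only [hψ] at hm1
    push_cast
    linarith
end
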